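/- arXiv:1303.4593 — 6 statements merged into one kernel-verified Lean document; each statement's English description precedes it below -/
import Mathlib

section
/- Every finite simple graph G admits an odd edge coloring with at most 4 colors; that is, the odd chromatic index of every finite simple graph satisfies χ'_o(G) ≤ 4. -/
/-!
A forest has an odd 2-edge-coloring: peel off the leaves hanging at the second vertex of a longest
path, color the rest by induction, and give the peeled edges the color of the one remaining edge
at that vertex, switching one of them if the degree there is even.

Let `E` be connected. If it has an even number of vertices, then so has the set `S` of its
vertices of even degree, and a spanning forest contains a forest `J` whose odd vertices are
exactly those of `S`; every vertex then has odd degree in `E \ J`, and three colors suffice. If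
`E` has an odd number of vertices, delete a leaf `v` of a spanning forest: what is left is
connected with an even number of vertices, and the edges at `v` get a fourth color, except that
one of them joins the forest as a pendant edge when the degree of `v` is even. Components are
colored separately.
-/

/-- An odd edge coloring of a simple graph `G` with colors in `Fin k`:
for each color `i` and vertex `v`, the number of edges of `G` incident to `v`
that receive color `i` is odd or zero. -/
def IsOddEdgeColoring {V : Type*} [Fintype V] [DecidableEq V]
    (G : SimpleGraph V) [DecidableRel G.Adj] {k : ℕ} (c : Sym2 V → Fin k) : Prop :=
  ∀ (i : Fin k) (v : V),
    Odd ((G.edgeFinset.filter (fun e => v ∈ e ∧ c e = i)).card) ∨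
      (G.edgeFinset.filter (fun e => v ∈ e ∧ c e = i)).card = 0

open Finset in
theorem Finset.card_symmDiff_add_two_mul_card_inter {β : Type*} [DecidableEq β]
    (s t : Finset β) : #(symmDiff s t) + 2 * #(s ∩ t) = #s + #t := by
  rw [symmDiff_def, sup_eq_union, card_union_of_disjoint disjoint_sdiff_sdiff]
  have := card_sdiff_add_card_inter s t
  have := card_sdiff_add_card_inter t s
  rw [inter_comm t s] at this
  omega

namespace SimpleGraph

variable {V : Type*} {G : SimpleGraph V}

/-- `y` is the second vertex of a longest path, `w` its first and `u` its third one (or `y` itself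
if the path has length one). -/
theorem IsAcyclic.exists_forall_adj_ne_forall_adj_eq [Finite V] (hG : G.IsAcyclic) {a b : V}
    (hab : G.Adj a b) : ∃ y w u, G.Adj y w ∧ w ≠ u ∧
      ∀ w', G.Adj y w' → w' ≠ u → ∀ x, G.Adj w' x → x = y := by
  classical
  have : Nonempty V := ⟨a⟩
  obtain ⟨w, _, p, hp, hmax⟩ := Walk.exists_isPath_forall_isPath_length_le_length G
  cases p with
  | nil =>
    have := hmax _ _ (Walk.cons hab Walk.nil) (by simp [hab.ne])
    simp at this
  | @cons _ y _ hwy q =>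
    have hq : q.IsPath := hp.of_cons
    refine ⟨y, w, q.snd, hwy.symm, fun h => ?_, fun w' hyw' hw'u x hw'x => ?_⟩
    · exact (Walk.cons_isPath_iff _ _).1 hp |>.2 (h ▸ q.getVert_mem_support 1)
    by_contra hxy
    have hw' : w' ∉ q.support := fun h => hw'u (hG.eq_snd_of_adj_start hq hyw' h)
    have hx : x ∉ q.support := by
      intro hx
      have := hG.mem_support_of_ne_mem_support_of_adj_of_isPath
        (p := Walk.cons hyw' Walk.nil) (by simp [hyw'.ne]) (hq.takeUntil hx) hw'x
        (fun h => hw' (q.support_takeUntil_subset_support hx h))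
      simp only [Walk.support_cons, Walk.support_nil, List.mem_cons, List.not_mem_nil,
        or_false] at this
      rcases this with h | h
      · exact hxy h
      · exact hw'x.ne h.symm
    have hlong : (Walk.cons hw'x.symm (Walk.cons hyw'.symm q)).IsPath := by
      simp only [Walk.cons_isPath_iff, Walk.support_cons, List.mem_cons, not_or]
      exact ⟨⟨hq, hw'⟩, hw'x.ne.symm, hx⟩
    have := hmax _ _ _ hlong
    simp only [Walk.length_cons] at this
    omega

end SimpleGraph

namespace OddColoring

open Finset SimpleGraph

variable {V α : Type*}

def Loopless (E : Finset (Sym2 V)) : Prop := ∀ e ∈ E, ¬e.IsDiag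

lemma Loopless.mono {A E : Finset (Sym2 V)} (hE : Loopless E) (h : A ⊆ E) : Loopless A :=
  fun e he => hE e (h he)

def graph (E : Finset (Sym2 V)) : SimpleGraph V := fromEdgeSet E

section Graph

variable {E F : Finset (Sym2 V)} {a b : V}

lemma graph_adj : (graph E).Adj a b ↔ s(a, b) ∈ E ∧ a ≠ b := by
  simp [graph]

lemma graph_mono (h : E ⊆ F) : graph E ≤ graph F :=
  fromEdgeSet_mono (coe_subset.2 h)

lemma mem_of_mem_edges (p : (graph E).Walk a b) {e : Sym2 V} (he : e ∈ p.edges) : e ∈ E := by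
  have := p.edges_subset_edgeSet he
  rw [graph, edgeSet_fromEdgeSet] at this
  exact this.1

lemma reachable_of_forall_mem_edges (p : (graph E).Walk a b) (h : ∀ e ∈ p.edges, e ∈ F) :
    (graph F).Reachable a b :=
  ⟨p.transfer _ fun e he => by
    rw [graph, edgeSet_fromEdgeSet]
    exact ⟨h e he, (graph E).not_isDiag_of_mem_edgeSet (p.edges_subset_edgeSet he)⟩⟩

lemma reachable_of_mem_of_mem {e : Sym2 V} {x y : V} (he : e ∈ E) (hx : x ∈ e) (hy : y ∈ e) :
    (graph E).Reachable x y := by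
  obtain ⟨z, rfl⟩ := Sym2.mem_iff_exists.1 hx
  rcases Sym2.mem_iff.1 hy with rfl | rfl
  · rfl
  rcases eq_or_ne x y with rfl | hxy
  · rfl
  exact (graph_adj.2 ⟨he, hxy⟩).reachable

theorem exists_spanning_forest [Fintype V] (E : Finset (Sym2 V)) :
    ∃ T ⊆ E, (graph T).IsAcyclic ∧ (graph T).Reachable = (graph E).Reachable := by
  classical
  obtain ⟨F, hFE, hF, hreach⟩ := (graph E).exists_isAcyclic_reachable_eq_le
  have hgraph : graph F.edgeFinset = F := by simp [graph]
  refine ⟨F.edgeFinset, fun e he => ?_, by rwa [hgraph], by rw [hgraph, hreach]⟩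
  have := edgeSet_mono hFE (mem_edgeFinset.1 he)
  rw [graph, edgeSet_fromEdgeSet] at this
  exact this.1

end Graph

variable [DecidableEq V]

def deg (E : Finset (Sym2 V)) (v : V) : ℕ := #{e ∈ E | v ∈ e}

def IsOdd (E : Finset (Sym2 V)) : Prop := ∀ v, Odd (deg E v) ∨ deg E v = 0

def IsOddColoring [DecidableEq α] (E : Finset (Sym2 V)) (c : Sym2 V → α) : Prop :=
  ∀ i, IsOdd {e ∈ E | c e = i}

def vertices (E : Finset (Sym2 V)) : Finset V := E.biUnion Sym2.toFinset

def Linked (E : Finset (Sym2 V)) : Prop :=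
  ∀ a ∈ vertices E, ∀ b ∈ vertices E, (graph E).Reachable a b

section Degree

variable {A B E : Finset (Sym2 V)} {v : V}

lemma mem_vertices : v ∈ vertices E ↔ ∃ e ∈ E, v ∈ e := by
  simp [vertices]

lemma deg_eq_zero_iff : deg E v = 0 ↔ v ∉ vertices E := by
  simp [deg, mem_vertices, filter_eq_empty_iff]

lemma deg_mono (h : A ⊆ B) (v : V) : deg A v ≤ deg B v :=
  card_le_card (filter_subset_filter _ h)

lemma deg_union_of_disjoint (h : Disjoint A B) (v : V) :
    deg (A ∪ B) v = deg A v + deg B v := by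
  rw [deg, filter_union, card_union_of_disjoint (disjoint_filter_filter h)]
  rfl

lemma deg_union_of_deg_eq_zero (h : deg A v = 0) : deg (A ∪ B) v = deg B v := by
  rw [deg, filter_union, card_eq_zero.1 h, empty_union]
  rfl

lemma deg_sdiff_add_deg (h : B ⊆ A) (v : V) : deg (A \ B) v + deg B v = deg A v := by
  rw [← deg_union_of_disjoint sdiff_disjoint, sdiff_union_of_subset h]

lemma odd_deg_symmDiff_iff :
    Odd (deg (symmDiff A B) v) ↔ (Odd (deg A v) ↔ Even (deg B v)) := by
  have hfilter :
      {e ∈ symmDiff A B | v ∈ e} = symmDiff {e ∈ A | v ∈ e} {e ∈ B | v ∈ e} := by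
    ext e
    simp only [mem_filter, mem_symmDiff]
    tauto
  have h := card_symmDiff_add_two_mul_card_inter {e ∈ A | v ∈ e} {e ∈ B | v ∈ e}
  rw [← hfilter] at h
  rw [deg, deg, deg, ← Nat.odd_add, ← h]
  simp [Nat.odd_add, parity_simps]

lemma deg_le_one_of_forall_mem (h : ∀ e ∈ E, v ∈ e) {w : V} (hw : w ≠ v) :
    deg E w ≤ 1 := by
  refine card_le_one.2 fun e he e' he' => ?_
  rw [mem_filter] at he he'
  rw [(Sym2.mem_and_mem_iff hw.symm).1 ⟨h e he.1, he.2⟩,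
    (Sym2.mem_and_mem_iff hw.symm).1 ⟨h e' he'.1, he'.2⟩]

lemma isOdd_empty : IsOdd (∅ : Finset (Sym2 V)) := fun _ => Or.inr (by simp [deg])

lemma odd_or_eq_zero_of_le_one {n : ℕ} (h : n ≤ 1) : Odd n ∨ n = 0 := by
  interval_cases n <;> simp

lemma isOdd_of_forall_mem (h : ∀ e ∈ E, v ∈ e) (hv : Odd (deg E v)) : IsOdd E := by
  intro w
  rcases eq_or_ne w v with rfl | hw
  · exact Or.inl hv
  · exact odd_or_eq_zero_of_le_one (deg_le_one_of_forall_mem h hw)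

end Degree

section Coloring

variable [DecidableEq α] {A B E : Finset (Sym2 V)} {c c' : Sym2 V → α}

theorem isOddEdgeColoring_iff [Fintype V] {G : SimpleGraph V} [DecidableRel G.Adj] {k : ℕ}
    (c : Sym2 V → Fin k) : IsOddEdgeColoring G c ↔ IsOddColoring G.edgeFinset c := by
  simp only [IsOddEdgeColoring, IsOddColoring, IsOdd, deg, filter_filter, and_comm]

lemma IsOddColoring.congr (h : IsOddColoring E c) (hc : ∀ e ∈ E, c e = c' e) :
    IsOddColoring E c' := by
  intro i
  rw [filter_congr fun e he => by rw [← hc e he]]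
  exact h i

lemma IsOdd.isOddColoring_const (h : IsOdd E) (a : α) : IsOddColoring E fun _ => a := by
  intro i v
  by_cases hi : a = i
  · simpa [hi] using h v
  · simp [hi, deg]

lemma IsOddColoring.comp {β : Type*} [DecidableEq β] (h : IsOddColoring E c) {f : α → β}
    (hf : Function.Injective f) : IsOddColoring E (f ∘ c) := by
  intro j v
  by_cases hj : ∃ i, f i = j
  · obtain ⟨i, rfl⟩ := hj
    simpa [hf.eq_iff] using h i v
  · push Not at hj
    simp [deg, hj]

lemma deg_filter_eq_of_forall_not_mem {L : Finset (Sym2 V)} {v : V} {i : α}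
    (h : ∀ e ∈ E \ L, c e = c' e) (hv : ∀ e ∈ L, v ∉ e) :
    deg {e ∈ E | c e = i} v = deg {e ∈ E \ L | c' e = i} v := by
  simp only [deg, filter_filter]
  refine congrArg card (ext fun e => ?_)
  simp only [mem_filter, mem_sdiff]
  constructor
  · rintro ⟨heE, hce, hve⟩
    have heL : e ∉ L := fun h => hv e h hve
    exact ⟨⟨heE, heL⟩, h e (mem_sdiff.2 ⟨heE, heL⟩) ▸ hce, hve⟩
  · rintro ⟨⟨heE, heL⟩, hce, hve⟩
    exact ⟨heE, (h e (mem_sdiff.2 ⟨heE, heL⟩)).symm ▸ hce, hve⟩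

lemma IsOddColoring.union_of_disjoint_colors (hA : IsOddColoring A c) (hB : IsOddColoring B c)
    (h : ∀ e ∈ A, ∀ e' ∈ B, c e ≠ c e') : IsOddColoring (A ∪ B) c := by
  intro i
  by_cases hi : ∃ e ∈ A, c e = i
  · obtain ⟨e, he, rfl⟩ := hi
    rw [filter_union, filter_eq_empty_iff.2 fun e' he' hce' => h e he e' he' hce'.symm,
      union_empty]
    exact hA _
  · push Not at hi
    rw [filter_union, filter_eq_empty_iff.2 hi, empty_union]
    exact hB i

lemma IsOddColoring.union_of_disjoint_vertices (hA : IsOddColoring A c)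
    (hB : IsOddColoring B c) (h : Disjoint (vertices A) (vertices B)) :
    IsOddColoring (A ∪ B) c := by
  intro i v
  have hzero {X : Finset (Sym2 V)} (hv : v ∉ vertices X) : deg {e ∈ X | c e = i} v = 0 :=
    Nat.eq_zero_of_le_zero <| (deg_mono (filter_subset _ _) v).trans (deg_eq_zero_iff.2 hv).le
  rw [filter_union]
  by_cases hv : v ∈ vertices A
  · rw [union_comm, deg_union_of_deg_eq_zero (hzero (disjoint_left.1 h hv))]
    exact hA i v
  · rw [deg_union_of_deg_eq_zero (hzero hv)]
    exact hB i v

end Coloring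

section Graph

variable {E F J T : Finset (Sym2 V)} {a b v : V}

lemma mem_vertices_of_reachable (h : (graph E).Reachable a b) (hab : a ≠ b) :
    a ∈ vertices E := by
  obtain ⟨p⟩ := h
  exact mem_vertices.2
    ⟨_, (graph_adj.1 (p.adj_snd (p.not_nil_of_ne hab))).1, Sym2.mem_mk_left _ _⟩

lemma not_reachable_of_not_mem_vertices (hv : v ∉ vertices E) (ha : a ≠ v) :
    ¬(graph E).Reachable v a :=
  fun h => hv (mem_vertices_of_reachable h ha.symm)

lemma odd_deg_edges_toFinset_iff {G : SimpleGraph V} {p : G.Walk a b} (hp : p.IsTrail) (v : V) :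
    Odd (deg p.edges.toFinset v) ↔ a ≠ b ∧ (v = a ∨ v = b) := by
  rw [deg, ← List.toFinset_eq hp.edges_nodup, ← Nat.not_even_iff_odd]
  simp only [Finset.card, filter_val, Multiset.filter_coe, Multiset.coe_card,
    ← List.countP_eq_length_filter]
  rw [hp.even_countP_edges_iff]
  tauto

lemma deg_le_one_of_forall_adj_eq {y : V} (hF : Loopless F)
    (h : ∀ x, (graph F).Adj v x → x = y) : deg F v ≤ 1 := by
  refine (card_le_card fun e he => ?_).trans (card_singleton s(v, y)).le
  rw [mem_filter] at he
  obtain ⟨x, rfl⟩ := Sym2.mem_iff_exists.1 he.2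
  have hvx : v ≠ x := fun h => hF _ he.1 (by simp [h])
  rw [h x (graph_adj.2 ⟨he.1, hvx⟩), mem_singleton]

lemma vertices_filter_not_mem_eq_erase (hodd : Odd #(vertices E)) (hv : v ∈ vertices E)
    (h : ∀ x ∈ vertices E, ∀ y ∈ vertices E, x ≠ v → y ≠ v →
      (graph {e ∈ E | v ∉ e}).Reachable x y) :
    vertices {e ∈ E | v ∉ e} = (vertices E).erase v := by
  ext x
  rw [mem_erase]
  constructor
  · intro hx
    obtain ⟨e, he, hxe⟩ := mem_vertices.1 hx
    rw [mem_filter] at he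
    exact ⟨by rintro rfl; exact he.2 hxe, mem_vertices.2 ⟨e, he.1, hxe⟩⟩
  · rintro ⟨hxv, hx⟩
    -- `x` keeps an edge on a path avoiding `v` to a third vertex, which exists by oddness
    obtain ⟨z, hz, hzxv⟩ : ∃ z ∈ vertices E, z ∉ ({x, v} : Finset V) := by
      refine exists_mem_notMem_of_card_lt_card ?_
      have h2 := card_le_card (show {x, v} ⊆ vertices E by simp [insert_subset_iff, hx, hv])
      rw [card_pair hxv] at h2 ⊢
      obtain ⟨k, hk⟩ := hodd
      omega
    simp only [mem_insert, mem_singleton, not_or] at hzxv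
    exact mem_vertices_of_reachable (h x hx z hz hxv hzxv.2) (Ne.symm hzxv.1)

lemma reachable_filter_not_mem_of_forall_adj_eq (hTE : T ⊆ E)
    (hreach : (graph T).Reachable = (graph E).Reachable) {t : V}
    (hv : ∀ x, (graph T).Adj v x → x = t) (hab : (graph E).Reachable a b) (ha : a ≠ v)
    (hb : b ≠ v) : (graph {e ∈ E | v ∉ e}).Reachable a b := by
  rw [← hreach] at hab
  obtain ⟨p, hp⟩ := hab.exists_isPath
  have hvp : v ∉ p.support := hp.isTrail.not_mem_support_of_subsingleton_neighborSet ha.symm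
    hb.symm fun x hx y hy => (hv x hx).trans (hv y hy).symm
  exact reachable_of_forall_mem_edges p fun e he => mem_filter.2
    ⟨hTE (mem_of_mem_edges p he), fun hve => hvp (Walk.mem_support_of_mem_edges he hve)⟩

lemma isAcyclic_graph_insert (hJ : (graph J).IsAcyclic) (hv : v ∉ vertices J) {t : V}
    (hvt : v ≠ t) : (graph (insert s(v, t) J)).IsAcyclic := by
  have : graph (insert s(v, t) J) = graph J ⊔ edge v t := by
    rw [graph, graph, edge, ← fromEdgeSet_union, coe_insert, Set.insert_eq, Set.union_comm]
  rw [this]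
  exact hJ.sup_edge_of_not_reachable (not_reachable_of_not_mem_vertices hv hvt.symm)

end Graph

lemma odd_or_eq_zero_card_filter_flip {β : Type*} [DecidableEq β] {A : Finset β} {e₀ : β}
    (he₀ : e₀ ∈ A) (b i : Bool) :
    Odd #{e ∈ A | (if e = e₀ ∧ Even #A then !b else b) = i} ∨
      #{e ∈ A | (if e = e₀ ∧ Even #A then !b else b) = i} = 0 := by
  by_cases hA : Even #A
  · simp only [hA, and_true]
    by_cases hi : b = i
    · subst hi
      left
      have : {e ∈ A | (if e = e₀ then !b else b) = b} = A.erase e₀ := by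
        ext e
        by_cases he : e = e₀ <;> simp [he]
      rw [this, card_erase_of_mem he₀]
      exact Nat.Even.sub_odd (card_pos.2 ⟨e₀, he₀⟩) hA odd_one
    · left
      have : {e ∈ A | (if e = e₀ then !b else b) = i} = {e₀} := by
        ext e
        by_cases he : e = e₀ <;> cases b <;> cases i <;> simp_all
      simp [this]
  · simp only [hA, and_false, if_false]
    by_cases hi : b = i
    · simpa [hi] using Or.inl (Nat.not_even_iff_odd.1 hA)
    · simp [hi]

section Forest

variable [Fintype V] {F : Finset (Sym2 V)}

theorem exists_isOddColoring_bool_of_isAcyclic (hF : Loopless F) (hA : (graph F).IsAcyclic) :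
    ∃ c : Sym2 V → Bool, IsOddColoring F c := by
  induction F using Finset.strongInduction with
  | H F ih =>
  rcases F.eq_empty_or_nonempty with rfl | ⟨e, he⟩
  · exact ⟨fun _ => true, fun i => by simpa using isOdd_empty⟩
  obtain ⟨a, b, hab⟩ : ∃ a b, (graph F).Adj a b := by
    induction e using Sym2.ind with
    | _ a b => exact ⟨a, b, graph_adj.2 ⟨he, fun h => hF _ he (by simp [h])⟩⟩
  obtain ⟨y, w, u, hyw, hwu, hleaf⟩ := hA.exists_forall_adj_ne_forall_adj_eq hab
  set L : Finset (Sym2 V) := {e ∈ F | y ∈ e ∧ e ≠ s(y, u)}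
  have hwL : s(y, w) ∈ L := by simp [L, (graph_adj.1 hyw).1, hwu, hyw.ne']
  obtain ⟨c', hc'⟩ := ih (F \ L) (sdiff_ssubset (filter_subset _ _) ⟨_, hwL⟩)
    (hF.mono sdiff_subset) (hA.anti (graph_mono sdiff_subset))
  set b := c' s(y, u)
  let c : Sym2 V → Bool := fun e =>
    if y ∈ e then (if e = s(y, w) ∧ Even (deg F y) then !b else b) else c' e
  have hagree : ∀ e ∈ F \ L, c e = c' e := by
    intro e he
    simp only [L, mem_sdiff, mem_filter, not_and, not_not] at he
    by_cases hye : y ∈ e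
    · obtain rfl := he.2 he.1 hye
      simp [c, b, hwu.symm, hyw.ne]
    · simp [c, hye]
  refine ⟨c, fun i v => ?_⟩
  by_cases hvy : v = y
  · subst hvy
    have : {e ∈ {e ∈ F | c e = i} | v ∈ e} =
        {e ∈ {e ∈ F | v ∈ e} | (if e = s(v, w) ∧ Even (deg F v) then !b else b) = i} := by
      ext e
      by_cases hve : v ∈ e <;> simp [c, hve]
    rw [deg, this]
    exact odd_or_eq_zero_card_filter_flip (mem_filter.2 ⟨(graph_adj.1 hyw).1, by simp⟩) b i
  by_cases hvL : ∃ e ∈ L, v ∈ e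
  · obtain ⟨e, heL, hve⟩ := hvL
    simp only [L, mem_filter] at heL
    obtain rfl := (Sym2.mem_and_mem_iff (Ne.symm hvy)).1 ⟨heL.2.1, hve⟩
    have hvu : v ≠ u := by rintro rfl; exact heL.2.2 rfl
    refine odd_or_eq_zero_of_le_one ((deg_mono (filter_subset _ F) v).trans ?_)
    exact deg_le_one_of_forall_adj_eq hF (hleaf v (graph_adj.2 ⟨heL.1, Ne.symm hvy⟩) hvu)
  · push Not at hvL
    rw [deg_filter_eq_of_forall_not_mem hagree hvL]
    exact hc' i v

end Forest

section Handshake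

variable [Fintype V] {E : Finset (Sym2 V)}

lemma sum_deg (hE : Loopless E) : ∑ v, deg E v = 2 * #E := by
  simp only [deg, card_filter]
  rw [sum_comm, mul_comm, ← smul_eq_mul, ← sum_const]
  refine sum_congr rfl fun e he => ?_
  rw [← card_filter, ← Sym2.card_toFinset_of_not_isDiag e (hE e he)]
  congr 1
  ext v
  simp

lemma even_card_odd_deg (hE : Loopless E) : Even #{v | Odd (deg E v)} := by
  rw [← even_sum_iff_even_card_odd, sum_deg hE]
  exact even_two_mul _

end Handshake

section Decomposition

variable [Fintype V] {E T : Finset (Sym2 V)} {v : V}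

lemma exists_subset_odd_deg_iff_of_ne (a : V) (S : Finset V)
    (hS : ∀ s ∈ S, (graph T).Reachable s a) :
    ∃ J ⊆ T, ∀ v ≠ a, (Odd (deg J v) ↔ v ∈ S) := by
  induction S using Finset.induction_on with
  | empty => exact ⟨∅, empty_subset _, by simp [deg]⟩
  | insert s S hs ih =>
    obtain ⟨J, hJT, hJ⟩ := ih fun t ht => hS t (mem_insert_of_mem ht)
    obtain ⟨p, hp⟩ := (hS s (mem_insert_self s S)).exists_isPath
    refine ⟨symmDiff J p.edges.toFinset, symmDiff_le_sup.trans (union_subset hJT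
      fun e he => mem_of_mem_edges p (List.mem_toFinset.1 he)), fun v hv => ?_⟩
    rw [odd_deg_symmDiff_iff, hJ v hv, ← Nat.not_odd_iff_even,
      odd_deg_edges_toFinset_iff hp.isTrail, mem_insert]
    by_cases hvs : v = s
    · subst hvs
      simp [hs, hv]
    · simp [hvs, hv]

theorem exists_subset_odd_deg_iff (hT : Loopless T) {S : Finset V}
    (hS : ∀ a ∈ S, ∀ b ∈ S, (graph T).Reachable a b) (heven : Even #S) :
    ∃ J ⊆ T, ∀ v, Odd (deg J v) ↔ v ∈ S := by
  rcases S.eq_empty_or_nonempty with rfl | ⟨a, ha⟩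
  · exact ⟨∅, empty_subset _, by simp [deg]⟩
  obtain ⟨J, hJT, hJ⟩ := exists_subset_odd_deg_iff_of_ne a S fun s hs => hS s hs a ha
  refine ⟨J, hJT, fun v => ?_⟩
  rcases ne_or_eq v a with hv | rfl
  · exact hJ v hv
  refine iff_of_true (by_contra fun hodd => ?_) ha
  have hodds : ({x | Odd (deg J x)} : Finset V) = S.erase v := by
    ext x
    rcases ne_or_eq x v with hx | rfl
    · simp [hJ x hx, hx]
    · simp [hodd]
  have h := even_card_odd_deg (hT.mono hJT)
  rw [hodds, card_erase_of_mem ha] at h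
  exact Nat.not_even_iff_odd.2 (Nat.Even.sub_odd (card_pos.2 ⟨_, ha⟩) heven odd_one) h

theorem Linked.exists_isAcyclic_isOdd_sdiff (hlink : Linked E) (hE : Loopless E)
    (heven : Even #(vertices E)) : ∃ J ⊆ E, (graph J).IsAcyclic ∧ IsOdd (E \ J) := by
  set S := {v ∈ vertices E | Even (deg E v)}
  have hS : Even #S := by
    have hodd : {v ∈ vertices E | ¬Even (deg E v)} = ({v | Odd (deg E v)} : Finset V) := by
      ext v
      simp only [mem_filter, mem_univ, true_and, Nat.not_even_iff_odd, and_iff_right_iff_imp]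
      intro h
      by_contra hv
      rw [deg_eq_zero_iff.2 hv] at h
      exact Nat.not_odd_zero h
    have hsplit := card_filter_add_card_filter_not (s := vertices E)
      (fun v => Even (deg E v))
    rw [hodd] at hsplit
    rw [← hsplit] at heven
    exact (Nat.even_add.1 heven).2 (even_card_odd_deg hE)
  obtain ⟨T, hTE, hT, hreach⟩ := exists_spanning_forest E
  obtain ⟨J, hJT, hJ⟩ := exists_subset_odd_deg_iff (hE.mono hTE)
    (fun a ha b hb => hreach ▸ hlink a (mem_filter.1 ha).1 b (mem_filter.1 hb).1) hS
  refine ⟨J, hJT.trans hTE, hT.anti (graph_mono hJT), fun v => ?_⟩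
  have hsum := deg_sdiff_add_deg (hJT.trans hTE) v
  by_cases hv : v ∈ vertices E
  · left
    have hJv := hJ v
    simp only [mem_filter, hv, true_and, ← hsum, Nat.even_add] at hJv
    rw [← Nat.not_even_iff_odd]
    intro hx
    simp [hx, ← Nat.not_even_iff_odd] at hJv
  · exact Or.inr (by have := deg_eq_zero_iff.2 hv; omega)

theorem Linked.exists_linked_even_filter_not_mem (hlink : Linked E) (hE : Loopless E)
    (hodd : Odd #(vertices E)) :
    ∃ v ∈ vertices E, Linked {e ∈ E | v ∉ e} ∧ Even #(vertices {e ∈ E | v ∉ e}) := by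
  obtain ⟨T, hTE, hT, hreach⟩ := exists_spanning_forest E
  obtain ⟨a, ha⟩ := card_pos.1 hodd.pos
  obtain ⟨e, he, hae⟩ := mem_vertices.1 ha
  obtain ⟨b, rfl⟩ := Sym2.mem_iff_exists.1 hae
  have hab : a ≠ b := fun h => hE _ he (by simp [h])
  obtain ⟨p⟩ : (graph T).Reachable a b := hreach ▸ (graph_adj.2 ⟨he, hab⟩).reachable
  obtain ⟨t, v, u, htv, hvu, hleaf⟩ :=
    hT.exists_forall_adj_ne_forall_adj_eq (p.adj_snd (p.not_nil_of_ne hab))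
  have hv : v ∈ vertices E :=
    mem_vertices.2 ⟨s(t, v), hTE (graph_adj.1 htv).1, Sym2.mem_mk_right _ _⟩
  have hreach' : ∀ x ∈ vertices E, ∀ y ∈ vertices E, x ≠ v → y ≠ v →
      (graph {e ∈ E | v ∉ e}).Reachable x y := fun x hx y hy hxv hyv =>
    reachable_filter_not_mem_of_forall_adj_eq hTE hreach (hleaf v htv hvu) (hlink x hx y hy)
      hxv hyv
  have hvert := vertices_filter_not_mem_eq_erase hodd hv hreach'
  refine ⟨v, hv, fun x hx y hy => ?_, ?_⟩
  · rw [hvert, mem_erase] at hx hy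
    exact hreach' x hx.2 y hy.2 hx.1 hy.1
  · rw [hvert, card_erase_of_mem hv]
    exact Nat.Odd.sub_odd hodd odd_one

theorem exists_isOddColoring_of_isOdd_isOdd_isAcyclic {O D F : Finset (Sym2 V)} (hO : IsOdd O)
    (hD : IsOdd D) (hF : Loopless F) (hFa : (graph F).IsAcyclic) (hOD : Disjoint O D)
    (hOF : Disjoint O F) (hDF : Disjoint D F) :
    ∃ c : Sym2 V → Fin 4, IsOddColoring (O ∪ D ∪ F) c := by
  obtain ⟨b, hb⟩ := exists_isOddColoring_bool_of_isAcyclic hF hFa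
  let f : Bool → Fin 4 := fun x => if x then 2 else 3
  have hf : Function.Injective f := by decide
  refine ⟨fun e => if e ∈ O then 0 else if e ∈ D then 1 else f (b e), ?_⟩
  refine (((hO.isOddColoring_const 0).congr ?_).union_of_disjoint_colors
    ((hD.isOddColoring_const 1).congr ?_) ?_).union_of_disjoint_colors ((hb.comp hf).congr ?_) ?_
  · intro e he
    simp [he]
  · intro e he
    simp [he, disjoint_right.1 hOD he]
  · intro e he e' he'
    simp [he, he', disjoint_right.1 hOD he']
  · intro e he
    simp [disjoint_right.1 hOF he, disjoint_right.1 hDF he]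
  · intro e he e' he'
    simp only [disjoint_right.1 hOF he', disjoint_right.1 hDF he', if_false]
    rcases mem_union.1 he with h | h
    · cases b e' <;> simp [h, f]
    · cases b e' <;> simp [h, disjoint_right.1 hOD h, f]

theorem exists_isOddColoring_of_subset_filter_mem (hE : Loopless E) {J D : Finset (Sym2 V)}
    (hJ : J ⊆ {e ∈ E | v ∉ e}) (hO : IsOdd ({e ∈ E | v ∉ e} \ J))
    (hD : D ⊆ {e ∈ E | v ∈ e}) (hDodd : IsOdd D)
    (hF : (graph (J ∪ ({e ∈ E | v ∈ e} \ D))).IsAcyclic) :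
    ∃ c : Sym2 V → Fin 4, IsOddColoring E c := by
  have hmem : ∀ e, (e ∈ J → e ∈ E ∧ v ∉ e) ∧ (e ∈ D → e ∈ E ∧ v ∈ e) :=
    fun e => ⟨fun h => mem_filter.1 (hJ h), fun h => mem_filter.1 (hD h)⟩
  have hE_eq : ({e ∈ E | v ∉ e} \ J) ∪ D ∪ (J ∪ ({e ∈ E | v ∈ e} \ D)) = E := by
    ext e
    have := hmem e
    simp only [mem_union, mem_sdiff, mem_filter]
    tauto
  rw [← hE_eq]
  refine exists_isOddColoring_of_isOdd_isOdd_isAcyclic hO hDodd (hE.mono ?_) hF ?_ ?_ ?_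
  · exact union_subset (hJ.trans (filter_subset _ _)) (sdiff_subset.trans (filter_subset _ _))
  all_goals
    refine disjoint_left.2 fun e h₁ h₂ => ?_
    have := hmem e
    simp only [mem_union, mem_sdiff, mem_filter] at h₁ h₂
    tauto

theorem Linked.exists_isOddColoring_of_odd (hlink : Linked E) (hE : Loopless E)
    (hodd : Odd #(vertices E)) : ∃ c : Sym2 V → Fin 4, IsOddColoring E c := by
  obtain ⟨v, hv, hlink', heven⟩ := hlink.exists_linked_even_filter_not_mem hE hodd
  obtain ⟨J, hJE', hJ, hO⟩ :=
    hlink'.exists_isAcyclic_isOdd_sdiff (hE.mono (filter_subset _ _)) heven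
  have hvJ : v ∉ vertices J := fun h => by
    obtain ⟨e, he, hve⟩ := mem_vertices.1 h
    exact (mem_filter.1 (hJE' he)).2 hve
  set D := {e ∈ E | v ∈ e}
  obtain ⟨e₀, he₀, hve₀⟩ := mem_vertices.1 hv
  obtain ⟨t, rfl⟩ := Sym2.mem_iff_exists.1 hve₀
  have hvt : v ≠ t := fun h => hE _ he₀ (by simp [h])
  have hdegD : deg D v = deg E v := by simp only [D, deg, filter_filter, and_self]
  have hD : ∀ e ∈ D, v ∈ e := fun e he => (mem_filter.1 he).2
  rcases Nat.even_or_odd (deg E v) with hdeg | hdeg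
  · have hmem : s(v, t) ∈ D := mem_filter.2 ⟨he₀, hve₀⟩
    refine exists_isOddColoring_of_subset_filter_mem hE hJE' hO (erase_subset s(v, t) D)
      (isOdd_of_forall_mem (fun e he => hD e (mem_of_mem_erase he)) ?_) ?_
    · rw [deg, filter_erase, card_erase_of_mem (mem_filter.2 ⟨hmem, hve₀⟩)]
      show Odd (deg D v - 1)
      rw [hdegD]
      exact Nat.Even.sub_odd (card_pos.2 ⟨_, mem_filter.2 ⟨he₀, hve₀⟩⟩) hdeg odd_one
    · rw [sdiff_erase_self hmem, union_comm, ← insert_eq]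
      exact isAcyclic_graph_insert hJ hvJ hvt
  · exact exists_isOddColoring_of_subset_filter_mem hE hJE' hO Subset.rfl
      (isOdd_of_forall_mem hD (hdegD.symm ▸ hdeg)) (by simpa using hJ)

theorem Linked.exists_isOddColoring (hlink : Linked E) (hE : Loopless E) :
    ∃ c : Sym2 V → Fin 4, IsOddColoring E c := by
  rcases Nat.even_or_odd #(vertices E) with heven | hodd
  · obtain ⟨J, hJE, hJ, hO⟩ := hlink.exists_isAcyclic_isOdd_sdiff hE heven
    simpa [sdiff_union_of_subset hJE] using exists_isOddColoring_of_isOdd_isOdd_isAcyclic hO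
      isOdd_empty (hE.mono hJE) hJ (disjoint_empty_right _) sdiff_disjoint (disjoint_empty_left _)
  · exact hlink.exists_isOddColoring_of_odd hE hodd

end Decomposition

section Components

variable [Fintype V] {E : Finset (Sym2 V)}

theorem exists_linked_component (hne : E.Nonempty) :
    ∃ C ⊆ E, C.Nonempty ∧ Linked C ∧ Disjoint (vertices C) (vertices (E \ C)) := by
  classical
  obtain ⟨e₀, he₀⟩ := hne
  obtain ⟨a, ha⟩ : ∃ a, a ∈ e₀ := Sym2.ind (f := fun e => ∃ a, a ∈ e)
    (fun a b => ⟨a, Sym2.mem_mk_left a b⟩) e₀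
  set C := {e ∈ E | ∀ x ∈ e, (graph E).Reachable a x}
  have hC : ∀ x, (graph E).Reachable a x → (graph C).Reachable a x := by
    rintro x ⟨p⟩
    refine reachable_of_forall_mem_edges p fun e he =>
      mem_filter.2 ⟨mem_of_mem_edges p he, fun y hy => ?_⟩
    exact ⟨p.takeUntil y (Walk.mem_support_of_mem_edges he hy)⟩
  refine ⟨C, filter_subset _ _,
    ⟨e₀, mem_filter.2 ⟨he₀, fun x hx => reachable_of_mem_of_mem he₀ ha hx⟩⟩, ?_, ?_⟩
  · intro x hx y hy
    obtain ⟨e, he, hxe⟩ := mem_vertices.1 hx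
    obtain ⟨e', he', hye⟩ := mem_vertices.1 hy
    exact (hC x ((mem_filter.1 he).2 x hxe)).symm.trans (hC y ((mem_filter.1 he').2 y hye))
  · rw [Finset.disjoint_left]
    intro x hx hx'
    obtain ⟨e, he, hxe⟩ := mem_vertices.1 hx
    obtain ⟨e', he', hxe'⟩ := mem_vertices.1 hx'
    rw [mem_sdiff, mem_filter] at he'
    exact he'.2 ⟨he'.1, fun y hy =>
      ((mem_filter.1 he).2 x hxe).trans (reachable_of_mem_of_mem he'.1 hxe' hy)⟩

theorem exists_isOddColoring_fin_four (hE : Loopless E) :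
    ∃ c : Sym2 V → Fin 4, IsOddColoring E c := by
  induction E using Finset.strongInduction with
  | H E ih =>
  rcases E.eq_empty_or_nonempty with rfl | hne
  · exact ⟨fun _ => 0, fun i => by simpa using isOdd_empty⟩
  obtain ⟨C, hCE, hCne, hC, hdisj⟩ := exists_linked_component hne
  obtain ⟨c₁, hc₁⟩ := hC.exists_isOddColoring (hE.mono hCE)
  obtain ⟨c₂, hc₂⟩ := ih (E \ C) (sdiff_ssubset hCE hCne) (hE.mono sdiff_subset)
  let c : Sym2 V → Fin 4 := fun e => if e ∈ C then c₁ e else c₂ e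
  refine ⟨c, ?_⟩
  have := (hc₁.congr (c' := c) fun e he => by simp [c, he]).union_of_disjoint_vertices
    (hc₂.congr (c' := c) fun e he => by simp [c, (mem_sdiff.1 he).2]) hdisj
  rwa [union_sdiff_of_subset hCE] at this

end Components

end OddColoring

/-- Every finite simple graph admits an odd edge coloring with at most 4 colors. -/
theorem oddChromaticIndex_le_four {V : Type*} [Fintype V] [DecidableEq V]
    (G : SimpleGraph V) [DecidableRel G.Adj] :
    ∃ c : Sym2 V → Fin 4, IsOddEdgeColoring G c := by
  obtain ⟨c, hc⟩ := OddColoring.exists_isOddColoring_fin_four (E := G.edgeFinset)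
    fun e he => G.not_isDiag_of_mem_edgeSet (SimpleGraph.mem_edgeFinset.1 he)
  exact ⟨c, (OddColoring.isOddEdgeColoring_iff c).2 hc⟩
end

section
/- Every finite tree T admits an odd edge coloring with at most 2 colors; that is, χ'_o(T) ≤ 2 for every finite tree T. -/
open Finset

lemma Finset.odd_card_filter_or_eq_zero_of_eq_add {α : Type*} [DecidableEq α] {s : Finset α}
    {a : α} (ha : a ∈ s) {g : α → Fin 2}
    (hg : ∀ y ∈ s, y ≠ a → g y = g a + if Even #s then 1 else 0) (i : Fin 2) :
    Odd #{y ∈ s | g y = i} ∨ #{y ∈ s | g y = i} = 0 := by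
  have hi : i = g a ∨ i = g a + 1 := by omega
  by_cases hs : Even #s
  · simp only [hs, if_true] at hg
    left
    rcases hi with rfl | rfl
    · have : {y ∈ s | g y = g a} = {a} := by
        ext y
        simp only [mem_filter, mem_singleton]
        refine ⟨fun ⟨hy, hgy⟩ => ?_, by rintro rfl; exact ⟨ha, rfl⟩⟩
        by_contra hya
        have := hg y hy hya
        omega
      rw [this, card_singleton]
      exact odd_one
    · have : {y ∈ s | g y = g a + 1} = s.erase a := by
        ext y
        simp only [mem_filter, mem_erase]
        refine ⟨fun ⟨hy, hgy⟩ => ⟨?_, hy⟩, fun ⟨hya, hy⟩ => ⟨hy, hg y hy hya⟩⟩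
        rintro rfl
        omega
      rw [this, card_erase_of_mem ha]
      exact Nat.Even.sub_odd (card_pos.2 ⟨a, ha⟩) hs odd_one
  · simp only [hs, if_false, add_zero] at hg
    have hconst : ∀ y ∈ s, g y = g a := fun y hy => by
      by_cases hya : y = a
      · rw [hya]
      · exact hg y hy hya
    rcases hi with rfl | rfl
    · left
      rw [filter_true_of_mem hconst]
      exact Nat.not_even_iff_odd.1 hs
    · right
      rw [card_eq_zero, filter_eq_empty_iff]
      intro y hy hgy
      have := hconst y hy
      omega

namespace SimpleGraph

variable {V : Type*} {G : SimpleGraph V} {r p p' x : V}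

def IsParent (G : SimpleGraph V) (r p x : V) : Prop :=
  G.Adj p x ∧ G.dist r p + 1 = G.dist r x

lemma Connected.exists_isParent (hG : G.Connected) (hx : x ≠ r) : ∃ p, G.IsParent r p x := by
  obtain ⟨q, hq⟩ := hG.exists_walk_length_eq_dist x r
  cases q with
  | nil => exact absurd rfl hx
  | @cons _ p _ hxp q =>
    refine ⟨p, hxp.symm, le_antisymm ?_ ?_⟩
    · rw [dist_comm (u := r), dist_comm (u := r), ← hq, Walk.length_cons]
      exact Nat.succ_le_succ (dist_le q)
    · obtain ⟨q', hq'⟩ := (hG p r).exists_walk_length_eq_dist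
      rw [dist_comm, dist_comm (u := r), ← hq']
      exact dist_le (q'.cons hxp)

lemma IsAcyclic.isParent_unique (hG : G.IsAcyclic) (h : G.IsParent r p x)
    (h' : G.IsParent r p' x) : p = p' := by
  have shortest_concat {p} (h : G.IsParent r p x) :
      ∃ q : G.Walk r p, (q.concat h.1).IsPath := by
    have hr : G.Reachable r p :=
      (Reachable.of_dist_ne_zero (u := r) (v := x) (by have := h.2; omega)).trans
        h.1.symm.reachable
    obtain ⟨q, hq⟩ := hr.exists_walk_length_eq_dist
    exact ⟨q, Walk.isPath_of_length_eq_dist _ (by rw [Walk.length_concat, hq, h.2])⟩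
  obtain ⟨q, hq⟩ := shortest_concat h
  obtain ⟨q', hq'⟩ := shortest_concat h'
  obtain ⟨rfl, -⟩ := Walk.concat_inj <|
    congrArg Subtype.val ((hG.subsingleton_path r x).elim ⟨_, hq⟩ ⟨_, hq'⟩)
  rfl

lemma IsTree.isParent_or_isParent (hG : G.IsTree) (r : V) {u v : V} (huv : G.Adj u v) :
    G.IsParent r u v ∨ G.IsParent r v u := by
  rcases hG.dist_eq_dist_add_one_of_adj r huv with h | h
  · exact Or.inr ⟨huv.symm, h.symm⟩
  · exact Or.inl ⟨huv, h.symm⟩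

variable {M : Type*}

noncomputable def ancestorSum [AddMonoid M] (G : SimpleGraph V) (r : V) (f : V → M) (x : V) :
    M :=
  open scoped Classical in
  if h : ∃ p, G.IsParent r p x then G.ancestorSum r f h.choose + f h.choose else 0
termination_by G.dist r x
decreasing_by have := h.choose_spec.2; omega

lemma IsAcyclic.ancestorSum_of_isParent [AddMonoid M] (hG : G.IsAcyclic) (f : V → M)
    (h : G.IsParent r p x) :
    G.ancestorSum r f x = G.ancestorSum r f p + f p := by
  have hex : ∃ p, G.IsParent r p x := ⟨p, h⟩
  rw [ancestorSum, dif_pos hex, hG.isParent_unique hex.choose_spec h]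

/-- Labels each edge by the value of `A` at its endpoint farther from `r`; the junk value `0`
for endpoints at equal distance never occurs on the edges of a tree. -/
noncomputable def childLabel [Zero M] (G : SimpleGraph V) (r : V) (A : V → M) : Sym2 V → M :=
  Sym2.lift ⟨fun u v => if G.dist r u < G.dist r v then A v
    else if G.dist r v < G.dist r u then A u else 0, fun u v => by
      dsimp only
      split_ifs <;> first | rfl | omega⟩

lemma IsParent.childLabel_mk [Zero M] (h : G.IsParent r p x) (A : V → M) :
    G.childLabel r A s(p, x) = A x := by
  have := h.2
  simp only [childLabel, Sym2.lift_mk]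
  rw [if_pos (by omega)]

lemma IsTree.exists_degree_le_one [Fintype V] [DecidableRel G.Adj] (hG : G.IsTree) :
    ∃ r, G.degree r ≤ 1 := by
  rcases subsingleton_or_nontrivial V with hV | hV
  · obtain ⟨r⟩ := hG.connected.nonempty
    have := G.degree_lt_card_verts r
    have := Fintype.card_le_one_iff_subsingleton.2 hV
    exact ⟨r, by omega⟩
  · obtain ⟨r, hr⟩ := hG.exists_vert_degree_one_of_nontrivial
    exact ⟨r, hr.le⟩

lemma card_filter_edgeFinset_eq_card_filter_neighborFinset [Fintype V] [DecidableEq V]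
    [DecidableRel G.Adj] (v : V) (P : Sym2 V → Prop) [DecidablePred P] :
    #{e ∈ G.edgeFinset | v ∈ e ∧ P e} = #{w ∈ G.neighborFinset v | P s(v, w)} := by
  rw [← card_image_of_injective {w ∈ G.neighborFinset v | P s(v, w)}
    (f := (s(v, ·))) fun _ _ => Sym2.congr_right.1]
  refine congrArg card (ext fun e => ?_)
  induction e using Sym2.ind with
  | h a b =>
    simp only [mem_filter, mem_edgeFinset, mem_edgeSet, mem_image, mem_neighborFinset]
    constructor
    · rintro ⟨hab, hv, hP⟩
      rcases Sym2.mem_iff.1 hv with rfl | rfl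
      · exact ⟨b, ⟨hab, hP⟩, rfl⟩
      · exact ⟨a, ⟨hab.symm, Sym2.eq_swap ▸ hP⟩, Sym2.eq_swap⟩
    · rintro ⟨w, ⟨hvw, hP⟩, he⟩
      rw [← mem_edgeSet, ← he]
      exact ⟨hvw, Sym2.mem_mk_left _ _, hP⟩

theorem IsTree.isOddEdgeColoring_childLabel [Fintype V] [DecidableEq V] [DecidableRel G.Adj]
    (hG : G.IsTree) {r : V} (hr : G.degree r ≤ 1) :
    IsOddEdgeColoring G <|
      G.childLabel r <| G.ancestorSum r fun v => if Even (G.degree v) then (1 : Fin 2) else 0 := by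
  set A := G.ancestorSum r fun v => if Even (G.degree v) then (1 : Fin 2) else 0
  intro i v
  simp_rw [card_filter_edgeFinset_eq_card_filter_neighborFinset]
  by_cases hv : v = r
  · subst hv
    have : #{w ∈ G.neighborFinset v | G.childLabel v A s(v, w) = i} ≤ 1 :=
      (card_filter_le _ _).trans (by rwa [card_neighborFinset_eq_degree])
    rcases Nat.le_one_iff_eq_zero_or_eq_one.1 this with h | h
    · exact Or.inr h
    · exact Or.inl (h.symm ▸ odd_one)
  obtain ⟨p, hp⟩ := hG.connected.exists_isParent hv
  refine odd_card_filter_or_eq_zero_of_eq_add (mem_neighborFinset _ _ _ |>.2 hp.1.symm)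
    (fun w hw hwp => ?_) i
  rw [card_neighborFinset_eq_degree, Sym2.eq_swap (a := v) (b := p), hp.childLabel_mk]
  rcases hG.isParent_or_isParent r ((mem_neighborFinset _ _ _).1 hw) with hvw | hwv
  · rw [hvw.childLabel_mk]
    exact hG.isAcyclic.ancestorSum_of_isParent _ hvw
  · exact absurd (hG.isAcyclic.isParent_unique hwv hp) hwp

end SimpleGraph

/-- Every finite tree admits an odd edge coloring with at most 2 colors. -/
theorem tree_oddChromaticIndex_le_two {V : Type*} [Fintype V] [DecidableEq V]
    (T : SimpleGraph V) [DecidableRel T.Adj] (hT : T.IsTree) :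
    ∃ c : Sym2 V → Fin 2, IsOddEdgeColoring T c := by
  obtain ⟨r, hr⟩ := hT.exists_degree_le_one
  exact ⟨_, hT.isOddEdgeColoring_childLabel hr⟩
end

section
/- Every finite forest F admits an odd edge coloring with at most 2 colors; that is, χ'_o(F) ≤ 2 for every finite forest F. -/
lemma exists_fin_two_eq_iff (a : Fin 2) (P : Prop) : ∃ b : Fin 2, b = a ↔ P := by
  by_cases hP : P
  · exact ⟨a, by simp [hP]⟩
  · exact ⟨a + 1, by fin_cases a <;> simp [hP]⟩

namespace SimpleGraph

variable {V α : Type*} {G H : SimpleGraph V} {c c' : Sym2 V → α} {u v w : V}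

variable (G) in
def IsOddAt (c : Sym2 V → α) (v : V) : Prop :=
  ∀ i, Odd {e ∈ G.incidenceSet v | c e = i}.ncard ∨ {e ∈ G.incidenceSet v | c e = i}.ncard = 0

variable (G) in
def IsOddColoringRootedAt (c : Sym2 V → α) (r : V) (a : α) : Prop :=
  (∀ v, v ≠ r → G.IsOddAt c v) ∧ ∀ e ∈ G.incidenceSet r, c e = a

lemma isOddEdgeColoring_iff_forall_isOddAt [Fintype V] [DecidableEq V] [DecidableRel G.Adj]
    {k : ℕ} {c : Sym2 V → Fin k} : IsOddEdgeColoring G c ↔ ∀ v, G.IsOddAt c v := by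
  have hcard : ∀ i v, (G.edgeFinset.filter (fun e => v ∈ e ∧ c e = i)).card =
      {e ∈ G.incidenceSet v | c e = i}.ncard := by
    intro i v
    rw [← Set.ncard_coe_finset]
    congr 1
    ext e
    simp [incidenceSet, and_assoc]
  simp only [IsOddEdgeColoring, IsOddAt, hcard]
  exact forall_comm

lemma isOddAt_congr (hGH : G.incidenceSet v = H.incidenceSet v)
    (hc : ∀ e ∈ G.incidenceSet v, c e = c' e) : G.IsOddAt c v ↔ H.IsOddAt c' v := by
  have : ∀ i, {e ∈ G.incidenceSet v | c e = i} = {e ∈ H.incidenceSet v | c' e = i} := by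
    intro i
    ext e
    constructor
    · rintro ⟨he, rfl⟩
      exact ⟨hGH ▸ he, (hc e he).symm⟩
    · rintro ⟨he, rfl⟩
      exact ⟨hGH ▸ he, hc e (hGH ▸ he)⟩
  simp only [IsOddAt, this]

lemma isOddAt_of_incidenceSet_eq_empty (h : G.incidenceSet v = ∅) : G.IsOddAt c v := by
  simp [IsOddAt, h]

lemma isOddAt_of_incidenceSet_eq_insert [Finite V] {e₀ : Sym2 V} {s : Set (Sym2 V)} {b : α}
    (hv : G.incidenceSet v = insert e₀ s) (he₀ : e₀ ∉ s) (hs : ∀ e ∈ s, c e = b)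
    (hb : b = c e₀ ↔ Even s.ncard) : G.IsOddAt c v := by
  intro i
  rw [hv]
  by_cases hx : c e₀ = i <;> by_cases hbi : b = i
  · rw [show {e ∈ insert e₀ s | c e = i} = insert e₀ s by grind, Set.ncard_insert_of_notMem he₀]
    exact Or.inl (hb.mp (hbi.trans hx.symm)).add_one
  · rw [show {e ∈ insert e₀ s | c e = i} = {e₀} by grind, Set.ncard_singleton]
    exact Or.inl odd_one
  · rw [show {e ∈ insert e₀ s | c e = i} = s by grind]
    exact Or.inl (Nat.not_even_iff_odd.mp fun h => hx (hbi ▸ (hb.mpr h).symm))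
  · rw [show {e ∈ insert e₀ s | c e = i} = ∅ by grind, Set.ncard_empty]
    exact Or.inr rfl

lemma incidenceSet_deleteEdges (s : Set (Sym2 V)) (v : V) :
    (G.deleteEdges s).incidenceSet v = G.incidenceSet v \ s := by
  ext e
  simp only [incidenceSet, edgeSet_deleteEdges]
  grind

lemma Reachable.of_mem_incidenceSet {e : Sym2 V} (he : e ∈ G.incidenceSet v) (hw : w ∈ e) :
    G.Reachable v w := by
  by_cases hvw : v = w
  · exact hvw ▸ Reachable.refl v
  · exact (G.adj_of_mem_incidenceSet hvw he ⟨he.1, hw⟩).reachable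

lemma incidenceSet_eq_empty_of_forall_not_adj (h : ∀ w, ¬ G.Adj v w) : G.incidenceSet v = ∅ := by
  refine Set.eq_empty_of_forall_notMem fun e he => ?_
  induction e using Sym2.ind with | h x y => ?_
  obtain ⟨hxy, rfl | rfl⟩ := G.mk'_mem_incidenceSet_iff.mp he
  · exact h y hxy
  · exact h x hxy.symm

variable [Finite V] {F : SimpleGraph V}

lemma exists_isOddAt_of_adj (hF : F.IsAcyclic) (huw : F.Adj u w)
    (hdel : ∀ r (a : Fin 2), ∃ c, (F.deleteEdges {s(u, w)}).IsOddColoringRootedAt c r a)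
    (a x : Fin 2) : ∃ c : Sym2 V → Fin 2,
      (∀ v, v ≠ u → F.IsOddAt c v) ∧ (∀ e ∈ F.incidenceSet u \ {s(u, w)}, c e = a) ∧
        c s(u, w) = x := by
  classical
  set F' := F.deleteEdges {s(u, w)}
  have hwu : ¬ F'.Reachable w u := fun h =>
    isBridge_iff.mp (isAcyclic_iff_forall_adj_isBridge.mp hF huw) h.symm
  obtain ⟨c₁, hc₁, hc₁u⟩ := hdel u a
  obtain ⟨b, hb⟩ := exists_fin_two_eq_iff x (Even (F'.incidenceSet w).ncard)
  obtain ⟨c₂, hc₂, hc₂w⟩ := hdel w b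
  set c : Sym2 V → Fin 2 := fun e =>
    if e = s(u, w) then x else if ∃ y ∈ e, F'.Reachable w y then c₂ e else c₁ e
  have hc : ∀ v, ∀ e ∈ F'.incidenceSet v, c e = if F'.Reachable w v then c₂ e else c₁ e := by
    intro v e he
    have hne : e ≠ s(u, w) := fun h => by simpa [F', h] using he.1
    have hside : (∃ y ∈ e, F'.Reachable w y) ↔ F'.Reachable w v :=
      ⟨fun ⟨y, hy, hwy⟩ => hwy.trans (Reachable.of_mem_incidenceSet he hy).symm,
        fun h => ⟨v, he.2, h⟩⟩
    simp only [c, if_neg hne, if_congr hside rfl rfl]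
  have hF' : ∀ v, F'.incidenceSet v = F.incidenceSet v \ {s(u, w)} := incidenceSet_deleteEdges _
  refine ⟨c, fun v hvu => ?_, fun e he => ?_, if_pos rfl⟩
  · by_cases hvw : v = w
    · rw [hvw]
      refine isOddAt_of_incidenceSet_eq_insert (e₀ := s(u, w)) (s := F'.incidenceSet w) ?_
        (by simp [hF']) (fun e he => by rw [hc w e he, if_pos (Reachable.refl w), hc₂w e he])
        (by simpa [c])
      rw [hF', Set.insert_sdiff_singleton,
        Set.insert_eq_of_mem (F.mk'_mem_incidenceSet_right_iff.mpr huw)]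
    · have hv : F.incidenceSet v = F'.incidenceSet v := by
        rw [hF', Set.sdiff_singleton_eq_self]
        exact fun h => (Sym2.mem_iff.mp h.2).elim hvu hvw
      by_cases hwv : F'.Reachable w v
      · exact (isOddAt_congr hv fun e he => by rw [hc v e (hv ▸ he), if_pos hwv]).mpr (hc₂ v hvw)
      · exact (isOddAt_congr hv fun e he => by rw [hc v e (hv ▸ he), if_neg hwv]).mpr (hc₁ v hvu)
  · rw [← hF'] at he
    rw [hc u e he, if_neg hwu, hc₁u e he]

lemma exists_forall_isOddAt (hF : F.IsAcyclic)
    (hdel : ∀ u w, F.Adj u w → ∀ r (a : Fin 2),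
      ∃ c, (F.deleteEdges {s(u, w)}).IsOddColoringRootedAt c r a) :
    ∃ c : Sym2 V → Fin 2, ∀ v, F.IsOddAt c v := by
  by_cases hedge : ∃ u w, F.Adj u w
  · obtain ⟨u, w, huw⟩ := hedge
    obtain ⟨x, hx⟩ := exists_fin_two_eq_iff 0
      (Even (F.incidenceSet u \ {s(u, w)}).ncard)
    obtain ⟨c, hodd, hrest, hcx⟩ := exists_isOddAt_of_adj hF huw (hdel u w huw) 0 x
    refine ⟨c, fun v => ?_⟩
    by_cases hvu : v = u
    · rw [hvu]
      refine isOddAt_of_incidenceSet_eq_insert (e₀ := s(u, w)) ?_ (by simp) hrest (by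
        rw [hcx, eq_comm]; exact hx)
      rw [Set.insert_sdiff_singleton,
        Set.insert_eq_of_mem (F.mk'_mem_incidenceSet_left_iff.mpr huw)]
    · exact hodd v hvu
  · simp only [not_exists] at hedge
    exact ⟨fun _ => 0, fun v => isOddAt_of_incidenceSet_eq_empty
      (incidenceSet_eq_empty_of_forall_not_adj (hedge v))⟩

theorem exists_isOddColoringRootedAt (hF : F.IsAcyclic) (r : V) (a : Fin 2) :
    ∃ c, F.IsOddColoringRootedAt c r a := by
  induction hn : F.edgeSet.ncard using Nat.strong_induction_on generalizing F r a with
  | _ n ih => ?_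
  have hdel : ∀ u w, F.Adj u w → ∀ r (a : Fin 2),
      ∃ c, (F.deleteEdges {s(u, w)}).IsOddColoringRootedAt c r a := fun u w huw r a =>
    ih _ (hn ▸ edgeSet_deleteEdges (G := F) _ ▸ Set.ncard_sdiff_singleton_lt_of_mem huw)
      (hF.anti (deleteEdges_le _)) r a rfl
  by_cases hr : ∃ w, F.Adj r w
  · obtain ⟨w, hrw⟩ := hr
    obtain ⟨c, hodd, hrest, hcx⟩ := exists_isOddAt_of_adj hF hrw (hdel r w hrw) a a
    refine ⟨c, hodd, fun e he => ?_⟩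
    by_cases he' : e = s(r, w)
    · rw [he', hcx]
    · exact hrest e ⟨he, he'⟩
  · simp only [not_exists] at hr
    obtain ⟨c, hc⟩ := exists_forall_isOddAt hF hdel
    refine ⟨c, fun v _ => hc v, fun e he => ?_⟩
    rw [incidenceSet_eq_empty_of_forall_not_adj hr] at he
    exact he.elim

end SimpleGraph

/-- Every finite forest admits an odd edge coloring with at most 2 colors. -/
theorem forest_oddChromaticIndex_le_two {V : Type*} [Fintype V] [DecidableEq V]
    (F : SimpleGraph V) [DecidableRel F.Adj] (hF : F.IsAcyclic) :
    ∃ c : Sym2 V → Fin 2, IsOddEdgeColoring F c := by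
  obtain ⟨c, hc⟩ := SimpleGraph.exists_forall_isOddAt hF fun _ _ _ =>
    SimpleGraph.exists_isOddColoringRootedAt (hF.anti (SimpleGraph.deleteEdges_le _))
  exact ⟨c, SimpleGraph.isOddEdgeColoring_iff_forall_isOddAt.mpr hc⟩
end

section
/- Let G be a finite loopless multigraph in which the number of edges between any pair of adjacent vertices is odd, i.e., for all u, v, the multiplicity m({u,v}) is either zero or odd. Then G admits an odd edge coloring with at most 4 colors, i.e., χ'_o(G) ≤ 4. -/
/-- An odd edge coloring of the loopless multigraph with multiplicity function `m`
using `k` colors: the multiplicity of each edge is split among the `k` colors, and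
for each color `i` and vertex `v`, the number of edges of color `i` incident to `v`
is odd or zero. -/
def IsOddMultiColoring {V : Type*} [Fintype V] (m : Sym2 V → ℕ) {k : ℕ}
    (c : Sym2 V → Fin k → ℕ) : Prop :=
  (∀ e : Sym2 V, ∑ i, c e i = m e) ∧
    ∀ (i : Fin k) (v : V), Odd (∑ u, c s(v, u) i) ∨ (∑ u, c s(v, u) i) = 0

/-!
Giving all parallel copies of an edge the same colour reduces the theorem to simple graphs,
because a sum of odd multiplicities is odd exactly when it has an odd number of terms. So it
suffices to split the edges of a simple graph `G` into four classes in each of which every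
degree is odd or zero (Pyber).

Take a breadth-first spanning forest and, in every component of odd order `≥ 3`, a deepest
vertex `w`; it is a leaf. Let `K` be `G` without the edges at these leaves; every component of
`K` with an edge has even order. Processing the forest from the leaves up, select parent edges
so that every non-root vertex keeps an odd number of unselected `K`-edges; by the handshake
lemma, applied in each component, so does every root that has `K`-edges. The unselected
`K`-edges form one class. The parent edge of a leaf `w` is also selected when `deg w` is even,
and the remaining edges at the leaves form a second class: it has odd degree at `w`, and degree
at most one elsewhere. The selected edges form a forest, and the edges of a forest split into
two classes with all degrees odd or zero: colour the child edges of a vertex alike when its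
parent edge is selected, and otherwise all but at most one of them alike.
-/

open Finset
open scoped Classical

noncomputable section

namespace SimpleGraph

variable {V : Type*}

def DegreesOddOrZero [Fintype V] (H : SimpleGraph V) [DecidableRel H.Adj] : Prop :=
  ∀ v, Odd (H.degree v) ∨ H.degree v = 0

@[simps]
def colorClass (G : SimpleGraph V) {ι : Type*} (χ : Sym2 V → ι) (i : ι) : SimpleGraph V where
  Adj u v := G.Adj u v ∧ χ s(u, v) = i
  symm := ⟨fun _ _ h => ⟨h.1.symm, Sym2.eq_swap ▸ h.2⟩⟩
  loopless := ⟨fun _ h => G.irrefl h.1⟩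

def IsOddColoring [Fintype V] (G : SimpleGraph V) {ι : Type*} (χ : Sym2 V → ι) : Prop :=
  ∀ i, (G.colorClass χ i).DegreesOddOrZero

@[simps]
def isolate (G : SimpleGraph V) (S : Finset V) : SimpleGraph V where
  Adj u v := G.Adj u v ∧ u ∉ S ∧ v ∉ S
  symm := ⟨fun _ _ h => ⟨h.1.symm, h.2.2, h.2.1⟩⟩
  loopless := ⟨fun _ h => G.irrefl h.1⟩

lemma isolate_le (G : SimpleGraph V) (S : Finset V) : G.isolate S ≤ G := fun _ _ h => h.1

lemma exists_colorClass_eq_four {G A₀ A₁ K : SimpleGraph V} (h₀ : A₀ ≤ G) (h₁ : A₁ ≤ G)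
    (hdisj : Disjoint A₀ A₁) (hK : K ≤ G) :
    ∃ χ : Sym2 V → Fin 4, G.colorClass χ 0 = A₀ ∧ G.colorClass χ 1 = A₁ ∧
      G.colorClass χ 2 = K \ (A₀ ⊔ A₁) ∧ G.colorClass χ 3 = (G \ K) \ (A₀ ⊔ A₁) := by
  let χ : Sym2 V → Fin 4 := fun e =>
    if e ∈ A₀.edgeSet then 0 else if e ∈ A₁.edgeSet then 1 else if e ∈ K.edgeSet then 2 else 3
  have hχ (u v) : χ s(u, v) =
      if A₀.Adj u v then 0 else if A₁.Adj u v then 1 else if K.Adj u v then 2 else 3 := by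
    simp [χ]
  refine ⟨χ, ?_, ?_, ?_, ?_⟩ <;> ext u v <;>
    simp only [colorClass_adj, hχ, sdiff_adj, sup_adj]
  · by_cases ha : A₀.Adj u v
    · simp [ha, h₀ ha]
    · split_ifs <;> simp [ha]
  · by_cases ha : A₁.Adj u v
    · simp [ha, h₁ ha, disjoint_left.1 hdisj.symm u v ha]
    · split_ifs <;> simp [ha]
  all_goals
    by_cases ha₀ : A₀.Adj u v
    · simp [ha₀]
    by_cases ha₁ : A₁.Adj u v
    · simp [ha₀, ha₁]
    by_cases hk : K.Adj u v
    · simp [ha₀, ha₁, hk, hK hk]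
    · simp [ha₀, ha₁, hk]

variable [Fintype V]

lemma degreesOddOrZero_congr {H H' : SimpleGraph V} [DecidableRel H.Adj] [DecidableRel H'.Adj]
    (h : H = H') : H.DegreesOddOrZero ↔ H'.DegreesOddOrZero := by
  subst h; convert Iff.rfl

lemma degree_sdiff_add_degree {K F : SimpleGraph V} [DecidableRel K.Adj] [DecidableRel F.Adj]
    (hle : F ≤ K) (v : V) : (K \ F).degree v + F.degree v = K.degree v := by
  simp only [← card_neighborFinset_eq_degree, neighborFinset_eq_filter, sdiff_adj]
  rw [← card_filter_add_card_filter_not (s := {u | K.Adj v u}) (F.Adj v), add_comm]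
  simp only [filter_filter]
  congr 2
  ext u
  simpa using fun h => hle h

theorem even_card_odd_degree_vertices_of_closed (H : SimpleGraph V) [DecidableRel H.Adj]
    {D : Finset V} (hD : ∀ v ∈ D, ∀ u, H.Adj v u → u ∈ D) :
    Even #{v ∈ D | Odd (H.degree v)} := by
  let H' : SimpleGraph V :=
    { Adj u v := H.Adj u v ∧ u ∈ D
      symm := ⟨fun u v h => ⟨h.1.symm, hD u h.2 v h.1⟩⟩
      loopless := ⟨fun _ h => H.irrefl h.1⟩ }
  have hdeg (v) : H'.degree v = if v ∈ D then H.degree v else 0 := by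
    simp only [← card_neighborFinset_eq_degree, neighborFinset_eq_filter]
    split_ifs with hv
    · congr 1; ext u; simp [H', hv]
    · simp [H', hv]
  convert H'.even_card_odd_degree_vertices using 2
  ext v
  by_cases hv : v ∈ D <;> simp [hdeg, hv]

theorem odd_degree_of_closed {H : SimpleGraph V} [DecidableRel H.Adj] {D : Finset V}
    (hD : ∀ v ∈ D, ∀ u, H.Adj v u → u ∈ D) (heven : Even #D) {r : V} (hr : r ∈ D)
    (hodd : ∀ v ∈ D, v ≠ r → Odd (H.degree v)) : Odd (H.degree r) := by
  by_contra hr_odd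
  have hfilter : {v ∈ D | Odd (H.degree v)} = D.erase r := by
    ext v
    by_cases hv : v = r
    · simp [hv, hr_odd]
    · simp only [mem_filter, mem_erase, hv, ne_eq, not_false_eq_true, true_and]
      exact ⟨fun h => h.1, fun h => ⟨h, hodd v h hv⟩⟩
  have := H.even_card_odd_degree_vertices_of_closed hD
  rw [hfilter, card_erase_of_mem hr, Nat.even_iff] at this
  rw [Nat.even_iff] at heven
  have := card_pos.2 ⟨r, hr⟩
  omega

variable {G : SimpleGraph V} [DecidableRel G.Adj] {S : Finset V}

lemma degree_sdiff_isolate_le_one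
    (hS : ∀ v w w', G.Adj v w → G.Adj v w' → w ∈ S → w' ∈ S → w = w')
    {v : V} (hv : v ∉ S) : (G \ G.isolate S).degree v ≤ 1 := by
  rw [← card_neighborFinset_eq_degree, card_le_one]
  intro w hw w' hw'
  simp only [mem_neighborFinset, sdiff_adj, isolate_adj, not_and, not_not] at hw hw'
  exact hS v w w' hw.1 hw'.1 (hw.2 hw.1 hv) (hw'.2 hw'.1 hv)

lemma degree_sdiff_isolate_sdiff_of_mem {F : SimpleGraph V} [DecidableRel F.Adj] (hF : F ≤ G)
    {v : V} (hv : v ∈ S) : ((G \ G.isolate S) \ F).degree v = G.degree v - F.degree v := by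
  simp only [← card_neighborFinset_eq_degree]
  rw [← card_sdiff_of_subset fun u hu => by simpa using hF (by simpa using hu)]
  congr 1
  ext u
  simp [hv]

end SimpleGraph

structure RootedForest (V : Type*) where
  parent : V → Option V
  depth : V → ℕ
  depth_lt_of_parent_eq : ∀ {v u}, parent v = some u → depth u < depth v

namespace RootedForest

variable {V : Type*} (T : RootedForest V)

lemma parent_ne_some_of_parent_eq {v u : V} (h : T.parent v = some u) : T.parent u ≠ some v :=
  fun h' => (T.depth_lt_of_parent_eq h).not_gt (T.depth_lt_of_parent_eq h')

def subforest (J : Finset V) : SimpleGraph V :=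
  SimpleGraph.fromRel fun v u => v ∈ J ∧ T.parent v = some u

@[simps]
def detach (S : Finset V) : RootedForest V where
  parent v := if v ∈ S then none else T.parent v
  depth := T.depth
  depth_lt_of_parent_eq {v u} h := by
    split_ifs at h
    exact T.depth_lt_of_parent_eq h

variable {T}

lemma subforest_adj {J : Finset V} {v u : V} :
    (T.subforest J).Adj v u ↔ v ∈ J ∧ T.parent v = some u ∨ u ∈ J ∧ T.parent u = some v := by
  refine ⟨fun h => h.2, fun h => ⟨?_, h⟩⟩
  rintro rfl
  rcases h with h | h <;> exact (T.depth_lt_of_parent_eq h.2).false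

lemma subforest_union (J₁ J₂ : Finset V) :
    T.subforest (J₁ ∪ J₂) = T.subforest J₁ ⊔ T.subforest J₂ := by
  ext v u
  simp only [subforest_adj, SimpleGraph.sup_adj, mem_union]
  tauto

lemma disjoint_subforest {J₁ J₂ : Finset V} (h : Disjoint J₁ J₂) :
    Disjoint (T.subforest J₁) (T.subforest J₂) := by
  refine SimpleGraph.disjoint_left.2 fun v u h₁ h₂ => ?_
  rw [subforest_adj] at h₁ h₂
  rcases h₁ with ⟨hv, hvu⟩ | ⟨hu, huv⟩ <;> rcases h₂ with ⟨hv', hvu'⟩ | ⟨hu', huv'⟩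
  · exact disjoint_left.1 h hv hv'
  · exact T.parent_ne_some_of_parent_eq hvu huv'
  · exact T.parent_ne_some_of_parent_eq huv hvu'
  · exact disjoint_left.1 h hu hu'

lemma subforest_le {G : SimpleGraph V} (hT : ∀ v u, T.parent v = some u → G.Adj v u)
    (J : Finset V) : T.subforest J ≤ G := by
  intro v u h
  rcases subforest_adj.1 h with h | h
  · exact hT v u h.2
  · exact (hT u v h.2).symm

lemma isolate_adj_of_detach_parent_eq {G : SimpleGraph V} {S : Finset V}
    (hT : ∀ v u, T.parent v = some u → G.Adj v u)
    (hS_leaf : ∀ w ∈ S, ∀ v, T.parent v ≠ some w) {v u : V}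
    (h : (T.detach S).parent v = some u) : (G.isolate S).Adj v u := by
  simp only [detach_parent] at h
  split_ifs at h with hv
  exact ⟨hT v u h, hv, fun hu => hS_leaf u hu v h⟩

variable [Fintype V]

variable (T) in
def children (v : V) : Finset V := {c | T.parent c = some v}

@[simp] lemma mem_children {c v : V} : c ∈ T.children v ↔ T.parent c = some v := by
  simp [children]

variable (T) in
/-- A forest version of "every component of `K` that has an edge has even order". -/
def EvenRooted (K : SimpleGraph V) : Prop :=
  ∀ r, T.parent r = none → K.degree r = 0 ∨ ∃ D : Finset V, r ∈ D ∧ Even #D ∧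
    (∀ v ∈ D, ∀ u, K.Adj v u → u ∈ D) ∧ ∀ v ∈ D, v ≠ r → T.parent v ≠ none

lemma degree_subforest {J : Finset V} (hJ : ∀ v ∈ J, T.parent v ≠ none) (v : V) :
    (T.subforest J).degree v = (if v ∈ J then 1 else 0) + #(T.children v ∩ J) := by
  rw [← SimpleGraph.card_neighborFinset_eq_degree, SimpleGraph.neighborFinset_eq_filter]
  simp only [subforest_adj, filter_or]
  rw [card_union_of_disjoint]
  · congr 1
    · split_ifs with hv
      · obtain ⟨u, hu⟩ := Option.ne_none_iff_exists'.mp (hJ v hv)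
        exact card_eq_one.2 ⟨u, by ext x; simp [hv, hu, eq_comm]⟩
      · simp [hv]
    · congr 1
      ext c
      simp [and_comm]
  · rw [disjoint_filter]
    rintro u - ⟨-, hvu⟩ ⟨-, huv⟩
    exact T.parent_ne_some_of_parent_eq hvu huv

variable (T) in
def chosenChild (J : Finset V) (u : V) : V :=
  if h : (T.children u ∩ J).Nonempty then h.choose else u

lemma chosenChild_mem {J : Finset V} {u : V} (h : (T.children u ∩ J).Nonempty) :
    T.chosenChild J u ∈ T.children u ∩ J := by
  rw [chosenChild, dif_pos h]
  exact h.choose_spec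

variable (T) in
/-- The colour of the edge from `v` to its parent. -/
def edgeColor (J : Finset V) (v : V) : Bool :=
  match _hv : T.parent v with
  | none => false
  | some u =>
    if u ∈ J then xor (edgeColor J u) (decide (Odd #(T.children u ∩ J)))
    else decide (Even #(T.children u ∩ J) ∧ v = T.chosenChild J u)
termination_by T.depth v
decreasing_by exact T.depth_lt_of_parent_eq ‹_›

lemma edgeColor_of_parent_eq {J : Finset V} {c u : V} (h : T.parent c = some u) :
    T.edgeColor J c = if u ∈ J then xor (T.edgeColor J u) (decide (Odd #(T.children u ∩ J)))
      else decide (Even #(T.children u ∩ J) ∧ c = T.chosenChild J u) := by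
  rw [edgeColor]
  split <;> simp_all

lemma card_filter_edgeColor_of_mem {J : Finset V} {v : V} (hv : v ∈ J) (b : Bool) :
    #{c ∈ T.children v ∩ J | T.edgeColor J c = b} =
      if xor (T.edgeColor J v) (decide (Odd #(T.children v ∩ J))) = b
      then #(T.children v ∩ J) else 0 := by
  have hcol (c) (hc : c ∈ T.children v ∩ J) :
      T.edgeColor J c = xor (T.edgeColor J v) (decide (Odd #(T.children v ∩ J))) := by
    rw [edgeColor_of_parent_eq (T.mem_children.1 (mem_inter.1 hc).1), if_pos hv]
  split_ifs with hx
  · exact congrArg card (filter_true_of_mem fun c hc => by rw [hcol c hc, hx])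
  · exact card_eq_zero.2 (filter_false_of_mem fun c hc => by rwa [hcol c hc])

lemma odd_or_eq_zero_card_filter_edgeColor_of_notMem {J : Finset V} {v : V} (hv : v ∉ J)
    (b : Bool) : Odd #{c ∈ T.children v ∩ J | T.edgeColor J c = b} ∨
      #{c ∈ T.children v ∩ J | T.edgeColor J c = b} = 0 := by
  set s := T.children v ∩ J with hs
  have hfilter : {c ∈ s | T.edgeColor J c = b} = {c ∈ s | (Even #s ∧ c = T.chosenChild J v) = b} :=
    filter_congr fun c hc => by
      rw [edgeColor_of_parent_eq (T.mem_children.1 (mem_inter.1 hc).1), if_neg hv, ← hs]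
      cases b <;> simp
  rw [hfilter]
  rcases Nat.even_or_odd #s with he | ho
  · rcases s.eq_empty_or_nonempty with h0 | hne
    · simp [h0]
    have hc : T.chosenChild J v ∈ s := T.chosenChild_mem hne
    left
    cases b
    · simp only [he, true_and, eq_iff_iff, iff_false, Bool.false_eq_true]
      rw [filter_ne' s, card_erase_of_mem hc]
      exact Nat.Even.sub_odd (card_pos.2 hne) he odd_one
    · simp only [he, true_and, eq_iff_iff, iff_true]
      rw [filter_eq' s, if_pos hc, card_singleton]
      exact odd_one
  · cases b <;> simp [Nat.not_even_iff_odd.2 ho, ho]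

lemma degreesOddOrZero_subforest_edgeColor {J : Finset V} (hJ : ∀ v ∈ J, T.parent v ≠ none)
    (b : Bool) : (T.subforest {v ∈ J | T.edgeColor J v = b}).DegreesOddOrZero := by
  intro v
  rw [degree_subforest fun w hw => hJ w (mem_filter.1 hw).1, inter_filter]
  simp only [mem_filter]
  by_cases hv : v ∈ J
  · rw [card_filter_edgeColor_of_mem hv]
    simp only [hv, true_and, Nat.odd_iff]
    rcases Nat.mod_two_eq_zero_or_one #(T.children v ∩ J) with h | h <;>
      cases T.edgeColor J v <;> cases b <;> simp [h] <;> omega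
  · simpa [hv] using odd_or_eq_zero_card_filter_edgeColor_of_notMem hv b

theorem exists_subset_degreesOddOrZero_subforest {J : Finset V}
    (hJ : ∀ v ∈ J, T.parent v ≠ none) : ∃ J₀ ⊆ J,
      (T.subforest J₀).DegreesOddOrZero ∧ (T.subforest (J \ J₀)).DegreesOddOrZero := by
  refine ⟨{v ∈ J | T.edgeColor J v = true}, filter_subset _ _,
    degreesOddOrZero_subforest_edgeColor hJ true, ?_⟩
  convert degreesOddOrZero_subforest_edgeColor hJ false using 2
  ext v
  cases h : T.edgeColor J v <;> simp [h]

variable (T) in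
/-- The parent edge of `v` is selected when this is needed to make `a v` minus the number of
selected edges at `v` odd. -/
def InParityJoin (a : V → ℕ) (v : V) : Prop :=
  T.parent v ≠ none ∧
    Even (a v + #((T.children v).attach.filter fun c => InParityJoin a c.1))
termination_by univ.sup T.depth - T.depth v
decreasing_by
  all_goals
    have hc := T.depth_lt_of_parent_eq (T.mem_children.1 (Subtype.prop ‹T.children v›))
    exact Nat.sub_lt_sub_left (hc.trans_le (le_sup (mem_univ _))) hc

lemma inParityJoin_iff (a : V → ℕ) (v : V) : T.InParityJoin a v ↔
    T.parent v ≠ none ∧ Even (a v + #{c ∈ T.children v | T.InParityJoin a c}) := by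
  rw [InParityJoin]
  have hmap : ((T.children v).attach.filter fun c => T.InParityJoin a c.1).map
      (Function.Embedding.subtype _) = {c ∈ T.children v | T.InParityJoin a c} := by
    ext; simp [and_comm]
  rw [← hmap, card_map]

variable (T) in
def parityJoin (a : V → ℕ) : Finset V := {v | T.InParityJoin a v}

lemma parent_ne_none_of_mem_parityJoin {a : V → ℕ} {v : V} (hv : v ∈ T.parityJoin a) :
    T.parent v ≠ none :=
  ((inParityJoin_iff a v).1 (mem_filter.1 hv).2).1

lemma odd_add_degree_subforest_parityJoin (a : V → ℕ) {v : V} (hv : T.parent v ≠ none) :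
    Odd (a v + (T.subforest (T.parityJoin a)).degree v) := by
  rw [degree_subforest fun _ => parent_ne_none_of_mem_parityJoin]
  have hch : T.children v ∩ T.parityJoin a = {c ∈ T.children v | T.InParityJoin a c} := by
    ext; simp [parityJoin]
  have hmem : v ∈ T.parityJoin a ↔ Even (a v + #{c ∈ T.children v | T.InParityJoin a c}) := by
    simp [parityJoin, inParityJoin_iff a v, hv]
  rw [hch]
  split_ifs with h
  · rw [← add_assoc, add_right_comm]
    exact (hmem.1 h).add_one
  · rw [zero_add]
    exact Nat.not_even_iff_odd.1 (mt hmem.2 h)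

theorem exists_degreesOddOrZero_sdiff_subforest {K : SimpleGraph V}
    (hK : ∀ v u, T.parent v = some u → K.Adj v u) (hroot : T.EvenRooted K) :
    ∃ J : Finset V, (∀ v ∈ J, T.parent v ≠ none) ∧ (K \ T.subforest J).DegreesOddOrZero := by
  set J := T.parityJoin (K.degree ·)
  refine ⟨J, fun _ => parent_ne_none_of_mem_parityJoin, ?_⟩
  have hdeg := SimpleGraph.degree_sdiff_add_degree (subforest_le hK J)
  have hnonroot {v} (hv : T.parent v ≠ none) : Odd ((K \ T.subforest J).degree v) := by
    have := odd_add_degree_subforest_parityJoin (K.degree ·) hv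
    rw [← hdeg v, add_assoc, ← two_mul] at this
    exact (Nat.odd_add.1 this).2 (even_two_mul _)
  intro r
  by_cases hr : T.parent r = none
  · rcases hroot r hr with h0 | ⟨D, hrD, hD, hclosed, hunique⟩
    · exact Or.inr (by have := hdeg r; omega)
    · exact Or.inl (SimpleGraph.odd_degree_of_closed (H := K \ T.subforest J)
        (fun v hv u h => hclosed v hv u h.1) hD hrD fun v hv hvr => hnonroot (hunique v hv hvr))
  · exact Or.inl (hnonroot hr)

section Leaves

variable {G : SimpleGraph V} {S : Finset V}

theorem exists_degreesOddOrZero_isolate_sdiff_subforest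
    (hT : ∀ v u, T.parent v = some u → G.Adj v u) (hS_parent : ∀ w ∈ S, T.parent w ≠ none)
    (hS_leaf : ∀ w ∈ S, ∀ v, T.parent v ≠ some w) (hroot : (T.detach S).EvenRooted (G.isolate S)) :
    ∃ J : Finset V, (∀ v ∈ J, T.parent v ≠ none) ∧ (∀ w ∈ S, w ∈ J ↔ Even (G.degree w)) ∧
      (G.isolate S \ T.subforest J).DegreesOddOrZero := by
  obtain ⟨J', hJ', hodd⟩ := (T.detach S).exists_degreesOddOrZero_sdiff_subforest
    (fun _ _ => isolate_adj_of_detach_parent_eq hT hS_leaf) hroot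
  have hJ'S (v) (hv : v ∈ J') : v ∉ S ∧ T.parent v ≠ none := by
    have := hJ' v hv
    by_cases hvS : v ∈ S <;> simp_all
  refine ⟨J' ∪ {w ∈ S | Even (G.degree w)}, fun v hv => ?_, fun w hw => ?_, ?_⟩
  · rcases mem_union.1 hv with h | h
    · exact (hJ'S v h).2
    · exact hS_parent v (mem_filter.1 h).1
  · have hwJ' : w ∉ J' := fun h => (hJ'S w h).1 hw
    simp [hw, hwJ']
  · refine (SimpleGraph.degreesOddOrZero_congr ?_).1 hodd
    ext u v
    simp only [SimpleGraph.sdiff_adj, SimpleGraph.isolate_adj, and_congr_right_iff,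
      not_iff_not]
    rintro ⟨-, hu, hv⟩
    simp [subforest_adj, hu, hv]

lemma degreesOddOrZero_sdiff_isolate_sdiff_subforest
    (hT : ∀ v u, T.parent v = some u → G.Adj v u) (hS_parent : ∀ w ∈ S, T.parent w ≠ none)
    (hS_leaf : ∀ w ∈ S, ∀ v, T.parent v ≠ some w)
    (hS_adj : ∀ v w w', G.Adj v w → G.Adj v w' → w ∈ S → w' ∈ S → w = w')
    {J : Finset V} (hJ : ∀ v ∈ J, T.parent v ≠ none) (hJS : ∀ w ∈ S, w ∈ J ↔ Even (G.degree w)) :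
    ((G \ G.isolate S) \ T.subforest J).DegreesOddOrZero := by
  intro v
  by_cases hv : v ∈ S
  · left
    have hch : T.children v ∩ J = ∅ := by
      ext c
      simpa using fun hc _ => hS_leaf v hv c hc
    rw [SimpleGraph.degree_sdiff_isolate_sdiff_of_mem (subforest_le hT J) hv,
      degree_subforest hJ, hch, card_empty, add_zero]
    obtain ⟨u, hu⟩ := Option.ne_none_iff_exists'.1 (hS_parent v hv)
    have hpos : 0 < G.degree v := (G.degree_pos_iff_exists_adj v).2 ⟨u, hT v u hu⟩
    split_ifs with h
    · exact Nat.Even.sub_odd hpos ((hJS v hv).1 h) odd_one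
    · simpa using Nat.not_even_iff_odd.1 (mt (hJS v hv).2 h)
  · have := (SimpleGraph.degree_le_of_le (sdiff_le (b := T.subforest J))).trans
      (SimpleGraph.degree_sdiff_isolate_le_one hS_adj hv)
    interval_cases ((G \ G.isolate S) \ T.subforest J).degree v <;> simp

theorem exists_isOddColoring_fin_four
    (hT : ∀ v u, T.parent v = some u → G.Adj v u) (hS_parent : ∀ w ∈ S, T.parent w ≠ none)
    (hS_leaf : ∀ w ∈ S, ∀ v, T.parent v ≠ some w)
    (hS_adj : ∀ v w w', G.Adj v w → G.Adj v w' → w ∈ S → w' ∈ S → w = w')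
    (hroot : (T.detach S).EvenRooted (G.isolate S)) :
    ∃ χ : Sym2 V → Fin 4, G.IsOddColoring χ := by
  obtain ⟨J, hJ, hJS, hodd₂⟩ :=
    exists_degreesOddOrZero_isolate_sdiff_subforest hT hS_parent hS_leaf hroot
  obtain ⟨J₀, hJ₀, hodd₀, hodd₁⟩ := exists_subset_degreesOddOrZero_subforest hJ
  have hsplit : T.subforest J₀ ⊔ T.subforest (J \ J₀) = T.subforest J := by
    rw [← subforest_union, union_sdiff_of_subset hJ₀]
  obtain ⟨χ, h₀, h₁, h₂, h₃⟩ := SimpleGraph.exists_colorClass_eq_four (subforest_le hT J₀)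
    (subforest_le hT _) (disjoint_subforest disjoint_sdiff) (G.isolate_le S)
  rw [hsplit] at h₂ h₃
  refine ⟨χ, fun i => ?_⟩
  fin_cases i
  · exact (SimpleGraph.degreesOddOrZero_congr h₀).2 hodd₀
  · exact (SimpleGraph.degreesOddOrZero_congr h₁).2 hodd₁
  · exact (SimpleGraph.degreesOddOrZero_congr h₂).2 hodd₂
  · exact (SimpleGraph.degreesOddOrZero_congr h₃).2
      (degreesOddOrZero_sdiff_isolate_sdiff_subforest hT hS_parent hS_leaf hS_adj hJ hJS)

end Leaves

end RootedForest

namespace SimpleGraph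

variable {V : Type*} {G : SimpleGraph V}

lemma exists_adj_dist_lt {v r : V} (h : G.Reachable v r) (hne : v ≠ r) :
    ∃ u, G.Adj v u ∧ G.dist u r < G.dist v r := by
  obtain ⟨p, hp⟩ := h.exists_walk_length_eq_dist
  cases p with
  | nil => exact absurd rfl hne
  | cons hadj q =>
    refine ⟨_, hadj, (dist_le q).trans_lt ?_⟩
    rw [← hp, Walk.length_cons]
    omega

variable (G) in
def root (v : V) : V := (G.connectedComponentMk v).out

lemma connectedComponentMk_root (v : V) :
    G.connectedComponentMk (G.root v) = G.connectedComponentMk v :=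
  Quot.out_eq _

lemma reachable_root (v : V) : G.Reachable v (G.root v) :=
  ConnectedComponent.exact (connectedComponentMk_root v).symm

lemma root_eq_root_iff {u v : V} : G.root u = G.root v ↔ G.Reachable u v := by
  refine ⟨fun h => ?_, fun h => by rw [root, root, ConnectedComponent.sound h]⟩
  rw [← ConnectedComponent.eq, ← connectedComponentMk_root u, h, connectedComponentMk_root]

variable (G) in
def bfsForest : RootedForest V where
  parent v := if h : ∃ u, G.Adj v u ∧ G.dist u (G.root v) < G.dist v (G.root v)
    then some h.choose else none
  depth v := G.dist v (G.root v)
  depth_lt_of_parent_eq {v u} huv := by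
    split_ifs at huv with h
    obtain rfl := Option.some_injective _ huv
    obtain ⟨hadj, hlt⟩ := h.choose_spec
    rwa [root_eq_root_iff.2 hadj.reachable.symm]

@[simp] lemma bfsForest_depth (v : V) : G.bfsForest.depth v = G.dist v (G.root v) := rfl

lemma bfsForest_adj {v u : V} (h : G.bfsForest.parent v = some u) : G.Adj v u := by
  simp only [bfsForest] at h
  split_ifs at h with hex
  exact Option.some_injective _ h ▸ hex.choose_spec.1

lemma bfsForest_parent_eq_none_iff {v : V} : G.bfsForest.parent v = none ↔ v = G.root v := by
  simp only [bfsForest, dite_eq_right_iff, reduceCtorEq, imp_false, not_exists, not_and, not_lt]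
  refine ⟨fun h => by_contra fun hne => ?_, fun h u _ => ?_⟩
  · obtain ⟨u, hu, hlt⟩ := exists_adj_dist_lt (reachable_root v) hne
    exact (h u hu).not_gt hlt
  · rw [← h, dist_self]
    exact Nat.zero_le _

lemma bfsForest_parent_ne_none_iff {v : V} :
    G.bfsForest.parent v ≠ none ↔ 0 < G.bfsForest.depth v := by
  rw [Ne, bfsForest_parent_eq_none_iff, bfsForest_depth, pos_iff_ne_zero, Ne,
    (reachable_root v).dist_eq_zero_iff]

variable (G) [Fintype V]

def componentFinset (v : V) : Finset V := {u | G.Reachable u v}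

def deepest (v : V) : V :=
  ((G.componentFinset (G.root v)).exists_max_image G.bfsForest.depth
    ⟨G.root v, by simp [componentFinset]⟩).choose

def oddComponentLeaves : Finset V :=
  {w | Odd #(G.componentFinset w) ∧ 1 < #(G.componentFinset w) ∧ w = G.deepest w}

variable {G}

@[simp] lemma mem_componentFinset {u v : V} : u ∈ G.componentFinset v ↔ G.Reachable u v := by
  simp [componentFinset]

lemma componentFinset_eq {u v : V} (h : G.Reachable u v) :
    G.componentFinset u = G.componentFinset v := by
  ext; simpa using ⟨fun h' => h'.trans h, fun h' => h'.trans h.symm⟩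

lemma deepest_spec (v : V) : G.deepest v ∈ G.componentFinset (G.root v) ∧
    ∀ u ∈ G.componentFinset (G.root v), G.bfsForest.depth u ≤ G.bfsForest.depth (G.deepest v) :=
  ((G.componentFinset (G.root v)).exists_max_image G.bfsForest.depth
    ⟨G.root v, by simp [componentFinset]⟩).choose_spec

lemma reachable_deepest (v : V) : G.Reachable (G.deepest v) v :=
  (mem_componentFinset.1 (deepest_spec v).1).trans (reachable_root v).symm

lemma depth_le_depth_deepest {u v : V} (h : G.Reachable u v) :
    G.bfsForest.depth u ≤ G.bfsForest.depth (G.deepest v) :=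
  (deepest_spec v).2 u (mem_componentFinset.2 (h.trans (reachable_root v)))

lemma deepest_eq_of_reachable {u v : V} (h : G.Reachable u v) : G.deepest u = G.deepest v := by
  simp only [deepest, root_eq_root_iff.2 h]

lemma mem_oddComponentLeaves {w : V} : w ∈ G.oddComponentLeaves ↔
    Odd #(G.componentFinset w) ∧ 1 < #(G.componentFinset w) ∧ w = G.deepest w := by
  simp [oddComponentLeaves]

lemma bfsForest_parent_ne_none_of_mem_oddComponentLeaves {w : V}
    (hw : w ∈ G.oddComponentLeaves) : G.bfsForest.parent w ≠ none := by
  obtain ⟨-, hcard, hdeep⟩ := mem_oddComponentLeaves.1 hw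
  obtain ⟨u, hu, hne⟩ := exists_mem_ne hcard (G.root w)
  have hu := mem_componentFinset.1 hu
  have hpos : 0 < G.bfsForest.depth u := by
    rw [← bfsForest_parent_ne_none_iff, Ne, bfsForest_parent_eq_none_iff, root_eq_root_iff.2 hu]
    exact hne
  rw [bfsForest_parent_ne_none_iff, hdeep]
  exact hpos.trans_le (depth_le_depth_deepest hu)

lemma bfsForest_parent_ne_of_mem_oddComponentLeaves {w : V} (hw : w ∈ G.oddComponentLeaves)
    (v : V) : G.bfsForest.parent v ≠ some w := by
  intro hvw
  have hlt := G.bfsForest.depth_lt_of_parent_eq hvw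
  have hle := depth_le_depth_deepest (bfsForest_adj hvw).reachable
  rw [← (mem_oddComponentLeaves.1 hw).2.2] at hle
  omega

lemma eq_of_adj_of_mem_oddComponentLeaves {v w w' : V} (h : G.Adj v w) (h' : G.Adj v w')
    (hw : w ∈ G.oddComponentLeaves) (hw' : w' ∈ G.oddComponentLeaves) : w = w' := by
  rw [(mem_oddComponentLeaves.1 hw).2.2, (mem_oddComponentLeaves.1 hw').2.2]
  exact deepest_eq_of_reachable (h.symm.reachable.trans h'.reachable)

lemma even_card_filter_notMem_oddComponentLeaves {r : V} (hr : 1 < #(G.componentFinset r)) :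
    Even #{v ∈ G.componentFinset r | v ∉ G.oddComponentLeaves} := by
  by_cases hodd : Odd #(G.componentFinset r)
  · have hD : {v ∈ G.componentFinset r | v ∉ G.oddComponentLeaves}
        = (G.componentFinset r).erase (G.deepest r) := by
      ext v
      simp only [mem_filter, mem_erase, mem_componentFinset, mem_oddComponentLeaves]
      constructor
      · rintro ⟨hv, hvS⟩
        refine ⟨fun h => hvS ?_, hv⟩
        rw [componentFinset_eq hv, h, deepest_eq_of_reachable (reachable_deepest r)]
        exact ⟨hodd, hr, rfl⟩
      · rintro ⟨hne, hv⟩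
        exact ⟨hv, fun hvS => hne (hvS.2.2.trans (deepest_eq_of_reachable hv))⟩
    rw [hD, card_erase_of_mem (by simpa using reachable_deepest r)]
    exact Nat.Odd.sub_odd hodd odd_one
  · have hD : {v ∈ G.componentFinset r | v ∉ G.oddComponentLeaves} = G.componentFinset r := by
      refine filter_true_of_mem fun v hv hvS => hodd ?_
      rw [← componentFinset_eq (mem_componentFinset.1 hv)]
      exact (mem_oddComponentLeaves.1 hvS).1
    rw [hD]
    exact Nat.not_odd_iff_even.1 hodd

lemma evenRooted_detach_oddComponentLeaves :
    (G.bfsForest.detach G.oddComponentLeaves).EvenRooted (G.isolate G.oddComponentLeaves) := by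
  intro r hr
  simp only [RootedForest.detach_parent] at hr
  split_ifs at hr with hrS
  · exact Or.inl (((G.isolate _).degree_eq_zero r).2 fun u h => h.2.1 hrS)
  by_cases hsingle : #(G.componentFinset r) ≤ 1
  · refine Or.inl (((G.isolate _).degree_eq_zero r).2 fun u hu => ?_)
    have := one_lt_card.2 ⟨r, mem_componentFinset.2 (Reachable.refl r), u,
      mem_componentFinset.2 hu.1.reachable.symm, hu.1.ne⟩
    omega
  refine Or.inr ⟨{v ∈ G.componentFinset r | v ∉ G.oddComponentLeaves}, by simpa using hrS,
    even_card_filter_notMem_oddComponentLeaves (lt_of_not_ge hsingle), ?_, ?_⟩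
  · intro v hv u huv
    simp only [mem_filter, mem_componentFinset] at hv ⊢
    exact ⟨huv.1.symm.reachable.trans hv.1, huv.2.2⟩
  · intro v hv hvr
    simp only [mem_filter, mem_componentFinset] at hv
    simp only [RootedForest.detach_parent, hv.2, if_false]
    intro h
    apply hvr
    rw [bfsForest_parent_eq_none_iff.1 h, bfsForest_parent_eq_none_iff.1 hr,
      root_eq_root_iff.2 hv.1]

variable (G) in
theorem exists_isOddColoring_fin_four : ∃ χ : Sym2 V → Fin 4, G.IsOddColoring χ :=
  G.bfsForest.exists_isOddColoring_fin_four (fun _ _ => bfsForest_adj)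
    (fun _ => bfsForest_parent_ne_none_of_mem_oddComponentLeaves)
    (fun _ => bfsForest_parent_ne_of_mem_oddComponentLeaves)
    (fun _ _ _ => eq_of_adj_of_mem_oddComponentLeaves) evenRooted_detach_oddComponentLeaves

end SimpleGraph

end

theorem isOddMultiColoring_of_isOddColoring {V : Type*} [Fintype V] {k : ℕ} {m : Sym2 V → ℕ}
    (hodd : ∀ e, m e = 0 ∨ Odd (m e)) {G : SimpleGraph V} (hG : ∀ u v, G.Adj u v ↔ m s(u, v) ≠ 0)
    {χ : Sym2 V → Fin k} (hχ : G.IsOddColoring χ) :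
    IsOddMultiColoring m (fun e i => if χ e = i then m e else 0) := by
  refine ⟨fun e => by simp, fun i v => ?_⟩
  have hterm (u) : Odd (if χ s(v, u) = i then m s(v, u) else 0) ↔ (G.colorClass χ i).Adj v u := by
    rw [SimpleGraph.colorClass_adj, hG]
    rcases hodd s(v, u) with h | h
    · simp [h]
    · by_cases hi : χ s(v, u) = i <;> simp [h, hi, h.pos.ne']
  simp only [Finset.odd_sum_iff_odd_card_odd, hterm, ← SimpleGraph.neighborFinset_eq_filter,
    SimpleGraph.card_neighborFinset_eq_degree]
  refine (hχ i v).imp_right fun h0 => Finset.sum_eq_zero fun u _ => ?_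
  have hnadj : ¬ (G.colorClass χ i).Adj v u := fun h =>
    ((G.colorClass χ i).degree_pos_iff_exists_adj v |>.mpr ⟨u, h⟩).ne' h0
  rw [SimpleGraph.colorClass_adj, hG] at hnadj
  split_ifs with hi <;> tauto

theorem multigraph_oddMultiplicities_oddChromaticIndex_le_four_general
    {V : Type*} [Fintype V]
    (m : Sym2 V → ℕ) (hloopless : ∀ v : V, m s(v, v) = 0)
    (hodd : ∀ e : Sym2 V, m e = 0 ∨ Odd (m e)) :
    ∃ c : Sym2 V → Fin 4 → ℕ, IsOddMultiColoring m c := by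
  let G : SimpleGraph V :=
    { Adj u v := m s(u, v) ≠ 0
      symm := ⟨fun u v h => by rwa [Sym2.eq_swap]⟩
      loopless := ⟨fun v h => h (hloopless v)⟩ }
  obtain ⟨χ, hχ⟩ := G.exists_isOddColoring_fin_four
  exact ⟨_, isOddMultiColoring_of_isOddColoring hodd (fun _ _ => Iff.rfl) hχ⟩

/-- Every finite loopless multigraph in which the number of edges between any pair of
adjacent vertices is odd admits an odd edge coloring with at most 4 colors. -/
theorem multigraph_oddMultiplicities_oddChromaticIndex_le_four
    {V : Type*} [Fintype V] [DecidableEq V]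
    (m : Sym2 V → ℕ) (hloopless : ∀ v : V, m s(v, v) = 0)
    (hodd : ∀ e : Sym2 V, m e = 0 ∨ Odd (m e)) :
    ∃ c : Sym2 V → Fin 4 → ℕ, IsOddMultiColoring m c :=
  multigraph_oddMultiplicities_oddChromaticIndex_le_four_general m hloopless hodd
end

section
/- Every finite connected loopless multigraph G with an even number of vertices admits an odd edge coloring with at most 3 colors, i.e., χ'_o(G) ≤ 3. -/
/-- The simple graph underlying a loopless multigraph with edge multiplicity
function `m`: two distinct vertices are adjacent iff some edge joins them. -/
def multigraphSimple {V : Type*} (m : Sym2 V → ℕ) : SimpleGraph V :=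
  SimpleGraph.fromRel (fun a b => 0 < m s(a, b))

/-!
Fix walks from a vertex `r` to every vertex; the edges traversed an odd number of times in total
form a subgraph `j ≤ m` of odd degree everywhere: each `v ≠ r` ends exactly one walk, and `r`
starts all `|V|` walks, an even number. Colour 0 takes `j`.

The rest `m - j` splits as `A + B + X` with `A`, `B` odd-or-zero and `X` of even degree, so that
`j + X`, `A`, `B` is an odd 3-colouring. The split is by induction on the number of edges: a double
edge or a cycle has even degrees and is absorbed into `X`. What remains is a simple forest, in which
the second vertex `u` of a longest path has at most one neighbour `t` that is not a leaf. Remove the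
leaves' edges at `u` and split the rest; then `u` has degree at most one in `A + B` and none in `X`,
and the removed edges can be shared between `A` and `B` so that both degrees at `u` become odd or
zero.
-/

open Finset SimpleGraph

theorem sum_tsub_lt_of_le {α : Type*} [Fintype α] {g h : α → ℕ} (hg : g ≤ h) (hg₀ : g ≠ 0) :
    ∑ e, (h - g) e < ∑ e, h e := by
  obtain ⟨e, he⟩ := Function.ne_iff.mp hg₀
  have hpos : 0 < g e := Nat.pos_of_ne_zero he
  exact sum_lt_sum (fun e _ => tsub_le_self) ⟨e, mem_univ _, Nat.sub_lt (hpos.trans_le (hg e)) hpos⟩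

theorem exists_add_eq_oddOrZero_oddOrZero {α β : ℕ} (hαβ : α + β ≤ 1) (k : ℕ) :
    ∃ k₁ k₂, k₁ + k₂ = k ∧ (Odd (α + k₁) ∨ α + k₁ = 0) ∧ (Odd (β + k₂) ∨ β + k₂ = 0) := by
  simp only [Nat.odd_iff]
  rcases (by omega : (α = 1 ∧ β = 0) ∨ (α = 0 ∧ β = 1) ∨ (α = 0 ∧ β = 0))
    with ⟨rfl, rfl⟩ | ⟨rfl, rfl⟩ | ⟨rfl, rfl⟩ <;>
  rcases Nat.even_or_odd' k with ⟨c, rfl | rfl⟩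
  · exact ⟨2 * c, 0, by omega⟩
  · exact ⟨0, 2 * c + 1, by omega⟩
  · exact ⟨0, 2 * c, by omega⟩
  · exact ⟨2 * c + 1, 0, by omega⟩
  · rcases Nat.eq_zero_or_pos c with rfl | hc
    · exact ⟨0, 0, by omega⟩
    · exact ⟨2 * c - 1, 1, by omega⟩
  · exact ⟨2 * c + 1, 0, by omega⟩

namespace SimpleGraph

variable {V : Type*}

theorem exists_isPath_forall_length_le [Finite V] (G : SimpleGraph V) {a b : V}
    {p : G.Walk a b} (hp : p.IsPath) :
    ∃ (x y : V) (q : G.Walk x y), q.IsPath ∧ p.length ≤ q.length ∧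
      ∀ (x' y' : V) (q' : G.Walk x' y'), q'.IsPath → q'.length ≤ q.length := by
  have := Fintype.ofFinite V
  let S : Set ℕ := {n | ∃ (x y : V) (q : G.Walk x y), q.IsPath ∧ q.length = n}
  have hS : BddAbove S := bddAbove_def.mpr ⟨Fintype.card V, by
    rintro _ ⟨x, y, q, hq, rfl⟩
    exact hq.length_lt.le⟩
  obtain ⟨x, y, q, hq, hlen⟩ := Nat.sSup_mem (s := S) ⟨_, a, b, p, hp, rfl⟩ hS
  refine ⟨x, y, q, hq, hlen ▸ le_csSup hS ⟨a, b, p, hp, rfl⟩, fun x' y' q' hq' => ?_⟩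
  exact hlen ▸ le_csSup hS ⟨x', y', q', hq', rfl⟩

theorem IsAcyclic.exists_pendant_star [Finite V] {G : SimpleGraph V} (hG : G.IsAcyclic)
    {a b : V} (hab : G.Adj a b) :
    ∃ u t x, G.Adj u x ∧ x ≠ t ∧ ∀ w, G.Adj u w → w ≠ t → ∀ z, G.Adj w z → z = u := by
  obtain ⟨x, y, P, hP, hlen, hmax⟩ :=
    G.exists_isPath_forall_length_le (p := .cons hab .nil) (by simp [hab.ne])
  -- `u` is the second vertex of a longest path `x u ⋯`
  cases P with
  | nil => simp at hlen
  | @cons _ u _ hxu q =>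
  rw [Walk.cons_isPath_iff] at hP
  obtain ⟨hq, hxq⟩ := hP
  refine ⟨u, q.snd, x, hxu.symm, fun h => hxq (h ▸ q.getVert_mem_support 1),
    fun w huw hwt z hwz => by_contra fun hzu => ?_⟩
  have hwq : w ∉ q.support := fun hw => hwt (hG.eq_snd_of_adj_start hq huw hw)
  have hq' : (Walk.cons huw.symm q).IsPath := hq.cons hwq
  by_cases hz : z ∈ (Walk.cons huw.symm q).support
  · exact hzu (by simpa using hG.eq_snd_of_adj_start hq' hwz hz)
  · have := hmax _ _ _ (hq'.cons (h := hwz.symm) hz)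
    simp only [Walk.length_cons] at this
    omega

end SimpleGraph

section multigraphSimple

variable {V : Type*}

theorem multigraphSimple_adj {m : Sym2 V → ℕ} {a b : V} :
    (multigraphSimple m).Adj a b ↔ a ≠ b ∧ 0 < m s(a, b) := by
  rw [multigraphSimple, fromRel_adj, Sym2.eq_swap (a := b), or_self]

theorem pos_of_mem_edgeSet {m : Sym2 V → ℕ} {e : Sym2 V}
    (he : e ∈ (multigraphSimple m).edgeSet) : 0 < m e := by
  induction e using Sym2.ind with
  | _ a b => exact (multigraphSimple_adj.mp he).2

theorem count_edges_le_of_isTrail [DecidableEq V] {h : Sym2 V → ℕ} {a b : V}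
    {p : (multigraphSimple h).Walk a b} (hp : p.IsTrail) : (fun e => p.edges.count e) ≤ h := by
  intro e
  by_cases he : e ∈ p.edges
  · have := List.nodup_iff_count_le_one.mp hp.edges_nodup e
    have := pos_of_mem_edgeSet (p.edges_subset_edgeSet he)
    dsimp only
    omega
  · simp [List.count_eq_zero_of_not_mem he]

end multigraphSimple

namespace Multigraph

variable {V : Type*}

section Star

variable [DecidableEq V]

def star (u : V) (W : Finset V) : Sym2 V → ℕ := ∑ w ∈ W, Pi.single s(u, w) 1

theorem star_union {u : V} {W₁ W₂ : Finset V} (h : Disjoint W₁ W₂) :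
    star u (W₁ ∪ W₂) = star u W₁ + star u W₂ :=
  sum_union h

theorem one_le_star_apply {u w : V} {W : Finset V} (hw : w ∈ W) : 1 ≤ star u W s(u, w) := by
  rw [star, Finset.sum_apply]
  exact le_trans (by simp) (single_le_sum (fun _ _ => Nat.zero_le _) hw)

theorem star_le {h : Sym2 V → ℕ} {u : V} {W : Finset V} (hW : ∀ w ∈ W, 0 < h s(u, w)) :
    star u W ≤ h := by
  intro e
  by_cases he : ∃ w ∈ W, e = s(u, w)
  · obtain ⟨w, hw, rfl⟩ := he
    simp only [star, Finset.sum_apply, Pi.single_apply, Sym2.congr_right, sum_ite_eq, hw, if_true]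
    exact hW w hw
  · push Not at he
    simp only [star, Finset.sum_apply, Pi.single_apply]
    rw [sum_eq_zero fun w hw => if_neg (he w hw)]
    exact Nat.zero_le _

end Star

variable [Fintype V]

def deg (h : Sym2 V → ℕ) (v : V) : ℕ := ∑ u, h s(v, u)

def IsOddOrZero (h : Sym2 V → ℕ) : Prop := ∀ v, Odd (deg h v) ∨ deg h v = 0

def IsEven (h : Sym2 V → ℕ) : Prop := ∀ v, Even (deg h v)

def HasOddOddEvenSplit (h : Sym2 V → ℕ) : Prop :=
  ∃ A B X : Sym2 V → ℕ, A + B + X = h ∧ IsOddOrZero A ∧ IsOddOrZero B ∧ IsEven X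

@[simp] theorem deg_zero (v : V) : deg 0 v = 0 := by simp [deg]

@[simp] theorem deg_add (g h : Sym2 V → ℕ) (v : V) : deg (g + h) v = deg g v + deg h v :=
  sum_add_distrib

@[simp] theorem deg_nsmul (n : ℕ) (h : Sym2 V → ℕ) (v : V) : deg (n • h) v = n * deg h v := by
  simp [deg, mul_sum]

theorem deg_sum {ι : Type*} (s : Finset ι) (h : ι → Sym2 V → ℕ) (v : V) :
    deg (∑ i ∈ s, h i) v = ∑ i ∈ s, deg (h i) v := by
  simp only [deg, Finset.sum_apply]
  exact sum_comm

theorem IsEven.add {g h : Sym2 V → ℕ} (hg : IsEven g) (hh : IsEven h) : IsEven (g + h) :=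
  fun v => by simpa using (hg v).add (hh v)

theorem isEven_two_nsmul (h : Sym2 V → ℕ) : IsEven (2 • h) :=
  fun v => by rw [deg_nsmul]; exact even_two_mul _

theorem HasOddOddEvenSplit.zero : HasOddOddEvenSplit (0 : Sym2 V → ℕ) :=
  ⟨0, 0, 0, by simp, fun v => by simp, fun v => by simp, fun v => by simp⟩

theorem HasOddOddEvenSplit.add_even {h X₀ : Sym2 V → ℕ} (hh : HasOddOddEvenSplit h)
    (hX₀ : IsEven X₀) : HasOddOddEvenSplit (h + X₀) := by
  obtain ⟨A, B, X, rfl, hA, hB, hX⟩ := hh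
  exact ⟨A, B, X + X₀, by abel, hA, hB, hX.add hX₀⟩

section DecidableEq

variable [DecidableEq V]

theorem deg_single {a b : V} (hab : a ≠ b) (x : V) :
    deg (Pi.single s(a, b) 1) x = (if x = a then 1 else 0) + if x = b then 1 else 0 := by
  by_cases hxa : x = a <;> by_cases hxb : x = b <;> simp_all [deg, Pi.single_apply]

theorem deg_star {u : V} {W : Finset V} (hu : u ∉ W) (x : V) :
    deg (star u W) x = if x = u then #W else if x ∈ W then 1 else 0 := by
  have hne : ∀ w ∈ W, u ≠ w := fun w hw h => hu (h ▸ hw)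
  rw [star, deg_sum, sum_congr rfl fun w hw => deg_single (hne w hw) x, sum_add_distrib]
  split_ifs with hxu hxW <;> simp_all

theorem IsOddOrZero.add_star {A : Sym2 V → ℕ} (hA : IsOddOrZero A) {u : V} {W : Finset V}
    (hu : u ∉ W) (hW : ∀ w ∈ W, deg A w = 0) (hAu : Odd (deg A u + #W) ∨ deg A u + #W = 0) :
    IsOddOrZero (A + star u W) := by
  intro x
  rw [deg_add, deg_star hu]
  split_ifs with hxu hxW
  · exact hxu ▸ hAu
  · simp [hW x hxW]
  · simpa using hA x

theorem HasOddOddEvenSplit.add_star {h : Sym2 V → ℕ} (hh : HasOddOddEvenSplit h)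
    {u : V} {K : Finset V} (hu : u ∉ K) (hK : ∀ w ∈ K, deg h w = 0) (hdeg : deg h u ≤ 1) :
    HasOddOddEvenSplit (h + star u K) := by
  obtain ⟨A, B, X, rfl, hA, hB, hX⟩ := hh
  simp only [deg_add] at hK hdeg
  have hXu : deg X u = 0 := by
    obtain ⟨c, hc⟩ := hX u
    omega
  obtain ⟨k₁, k₂, hk, h₁, h₂⟩ :=
    exists_add_eq_oddOrZero_oddOrZero (α := deg A u) (β := deg B u) (by omega) #K
  obtain ⟨W, hWK, rfl⟩ := exists_subset_card_eq (show k₁ ≤ #K by omega)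
  have hcard : #(K \ W) = k₂ := by rw [card_sdiff_of_subset hWK]; omega
  refine ⟨A + star u W, B + star u (K \ W), X, ?_,
    hA.add_star (fun hu' => hu (hWK hu')) (fun w hw => by have := hK w (hWK hw); omega) h₁,
    hB.add_star (fun hu' => hu (sdiff_subset hu'))
      (fun w hw => by have := hK w (sdiff_subset hw); omega) (hcard ▸ h₂), hX⟩
  rw [show star u K = star u W + star u (K \ W) by
    rw [← star_union disjoint_sdiff, union_sdiff_of_subset hWK]]
  abel

theorem exists_star_le_of_isAcyclic {h : Sym2 V → ℕ} (hloop : ∀ v, h s(v, v) = 0)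
    (hle : ∀ e, h e ≤ 1) (hac : (multigraphSimple h).IsAcyclic) (hne : h ≠ 0) :
    ∃ u K, K.Nonempty ∧ u ∉ K ∧ star u K ≤ h ∧
      (∀ w ∈ K, deg (h - star u K) w = 0) ∧ deg (h - star u K) u ≤ 1 := by
  classical
  have adj_of_ne_zero : ∀ x y, h s(x, y) ≠ 0 → (multigraphSimple h).Adj x y := fun x y hxy =>
    multigraphSimple_adj.mpr ⟨by rintro rfl; exact hxy (hloop x), Nat.pos_of_ne_zero hxy⟩
  obtain ⟨e, he⟩ := Function.ne_iff.mp hne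
  induction e using Sym2.ind with | _ a b =>
  obtain ⟨u, t, x, hux, hxt, hleaf⟩ := hac.exists_pendant_star (adj_of_ne_zero a b he)
  let K := univ.filter fun w => (multigraphSimple h).Adj u w ∧ w ≠ t
  have hKadj : ∀ w ∈ K, 0 < h s(u, w) := fun w hw =>
    (multigraphSimple_adj.mp (mem_filter.mp hw).2.1).2
  have hstar_eq : ∀ w ∈ K, (h - star u K) s(u, w) = 0 := fun w hw =>
    Nat.sub_eq_zero_of_le ((hle _).trans (one_le_star_apply hw))
  refine ⟨u, K, ⟨x, by simp [K, hux, hxt]⟩, by simp [K], star_le hKadj, fun w hw => ?_, ?_⟩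
  · refine sum_eq_zero fun z _ => ?_
    by_cases hzu : z = u
    · rw [hzu, Sym2.eq_swap]
      exact hstar_eq w hw
    · have : h s(w, z) = 0 := by
        by_contra hwz
        exact hzu (hleaf w (mem_filter.mp hw).2.1 (mem_filter.mp hw).2.2 z (adj_of_ne_zero w z hwz))
      simp [this]
  · have hoff : ∀ z, z ≠ t → (h - star u K) s(u, z) = 0 := fun z hzt => by
      by_cases huz : (multigraphSimple h).Adj u z
      · exact hstar_eq z (by simp [K, huz, hzt])
      · have : h s(u, z) = 0 := by
          by_contra h0
          exact huz (adj_of_ne_zero u z h0)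
        simp [this]
    rw [deg, sum_eq_single t (fun z _ hzt => hoff z hzt) (by simp)]
    exact tsub_le_self.trans (hle _)

theorem deg_count_edges {G : SimpleGraph V} {a b : V} (p : G.Walk a b) (x : V) :
    (deg (fun e => p.edges.count e) x : ZMod 2) =
      (if x = a then 1 else 0) + if x = b then 1 else 0 := by
  induction p with
  | nil => simp [deg, CharTwo.add_self_eq_zero]
  | @cons a c b hac q ih =>
    have hsplit : (fun e => (s(a, c) :: q.edges).count e) =
        Pi.single s(a, c) 1 + fun e => q.edges.count e := by
      ext e
      simp only [List.count_cons, Pi.add_apply, Pi.single_apply, beq_iff_eq]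
      grind
    rw [Walk.edges_cons, hsplit, deg_add, Nat.cast_add, ih, deg_single hac.ne]
    push_cast
    linear_combination (CharTwo.add_self_eq_zero (if x = c then (1 : ZMod 2) else 0))

theorem isEven_count_edges {G : SimpleGraph V} {v : V} (c : G.Walk v v) :
    IsEven fun e => c.edges.count e := fun x => by
  rw [← ZMod.natCast_eq_zero_iff_even, deg_count_edges, CharTwo.add_self_eq_zero]

end DecidableEq

theorem exists_le_forall_odd_deg {m : Sym2 V → ℕ} (hconn : (multigraphSimple m).Connected)
    (heven : Even (Fintype.card V)) : ∃ j ≤ m, ∀ v, Odd (deg j v) := by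
  classical
  obtain ⟨r⟩ := hconn.nonempty
  let p : ∀ v, (multigraphSimple m).Walk r v := fun v => (hconn r v).some
  let J : Sym2 V → ZMod 2 := fun e => ∑ v, ((p v).edges.count e : ZMod 2)
  refine ⟨fun e => (J e).val, fun e => ?_, fun x => ?_⟩
  · by_cases hJ : J e = 0
    · simp [hJ]
    obtain ⟨v, -, hv⟩ := exists_ne_zero_of_sum_ne_zero hJ
    have hmem : e ∈ (p v).edges := List.count_pos_iff.mp (Nat.pos_of_ne_zero (by
      rintro h
      simp [h] at hv))
    have := pos_of_mem_edgeSet ((p v).edges_subset_edgeSet hmem)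
    have := (J e).val_lt
    dsimp only
    omega
  · rw [← ZMod.natCast_eq_one_iff_odd]
    obtain ⟨t, ht⟩ := heven
    calc (deg (fun e => (J e).val) x : ZMod 2)
        = ∑ v, (deg (fun e => (p v).edges.count e) x : ZMod 2) := by
          simp only [deg, Nat.cast_sum, ZMod.natCast_val, ZMod.cast_id', id, J]
          exact sum_comm
      _ = ∑ v, ((if x = r then 1 else 0) + if x = v then 1 else 0) := by
          simp only [deg_count_edges]
      _ = 1 := by
          rw [sum_add_distrib, sum_const, card_univ, ht, add_nsmul, CharTwo.add_self_eq_zero]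
          simp

theorem hasOddOddEvenSplit (h : Sym2 V → ℕ) (hloop : ∀ v, h s(v, v) = 0) :
    HasOddOddEvenSplit h := by
  classical
  have of_le : ∀ g ≤ h, g ≠ 0 → HasOddOddEvenSplit (h - g) := fun g hg hg₀ =>
    hasOddOddEvenSplit (h - g) fun v => by simp [hloop v]
  by_cases hmult : ∃ e, 2 ≤ h e
  · obtain ⟨e, he⟩ := hmult
    have hle : 2 • Pi.single e 1 ≤ h := fun e' => by
      by_cases he' : e' = e <;> simp [he', he]
    have hne : 2 • Pi.single e 1 ≠ (0 : Sym2 V → ℕ) := fun h0 => by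
      simpa using congrFun h0 e
    simpa only [tsub_add_cancel_of_le hle] using
      (of_le _ hle hne).add_even (isEven_two_nsmul (Pi.single e 1))
  push Not at hmult
  by_cases hac : (multigraphSimple h).IsAcyclic
  · by_cases h0 : h = 0
    · exact h0 ▸ .zero
    obtain ⟨u, K, ⟨w, hw⟩, hu, hle, hKdeg, hudeg⟩ :=
      exists_star_le_of_isAcyclic hloop (fun e => by have := hmult e; omega) hac h0
    have hne : star u K ≠ 0 := fun h0 => by
      simpa [h0] using one_le_star_apply (u := u) hw
    simpa only [tsub_add_cancel_of_le hle] using (of_le _ hle hne).add_star hu hKdeg hudeg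
  · obtain ⟨v, c, hc⟩ : ∃ v, ∃ c : (multigraphSimple h).Walk v v, c.IsCycle := by
      simpa [IsAcyclic] using hac
    have hle := count_edges_le_of_isTrail hc.isTrail
    obtain ⟨e, he⟩ := List.exists_mem_of_ne_nil _ (Walk.edges_eq_nil.not.mpr hc.not_nil)
    have hne : (fun e => c.edges.count e) ≠ 0 := fun h0 =>
      (List.count_pos_iff.mpr he).ne' (congrFun h0 e)
    simpa only [tsub_add_cancel_of_le hle] using (of_le _ hle hne).add_even (isEven_count_edges c)
termination_by ∑ e, h e
decreasing_by exact sum_tsub_lt_of_le hg hg₀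

end Multigraph

theorem multigraph_connected_even_oddChromaticIndex_le_three_general
    {V : Type*} [Fintype V]
    (m : Sym2 V → ℕ) (hloopless : ∀ v : V, m s(v, v) = 0)
    (hconn : (multigraphSimple m).Connected) (heven : Even (Fintype.card V)) :
    ∃ c : Sym2 V → Fin 3 → ℕ, IsOddMultiColoring m c := by
  obtain ⟨j, hjm, hj⟩ := Multigraph.exists_le_forall_odd_deg hconn heven
  obtain ⟨A, B, X, hsum, hA, hB, hX⟩ :=
    Multigraph.hasOddOddEvenSplit (m - j) fun v => by simp [hloopless]
  refine ⟨fun e => ![j e + X e, A e, B e], fun e => ?_, fun i v => ?_⟩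
  · have hsplit : A e + B e + X e = m e - j e := congrFun hsum e
    have hje : j e ≤ m e := hjm e
    simp [Fin.sum_univ_three]
    omega
  · fin_cases i
    · exact Or.inl (by simpa [Multigraph.deg, sum_add_distrib] using (hj v).add_even (hX v))
    · exact hA v
    · exact hB v

/-- Every finite connected loopless multigraph with an even number of vertices
admits an odd edge coloring with at most 3 colors. -/
theorem multigraph_connected_even_oddChromaticIndex_le_three
    {V : Type*} [Fintype V] [DecidableEq V]
    (m : Sym2 V → ℕ) (hloopless : ∀ v : V, m s(v, v) = 0)
    (hconn : (multigraphSimple m).Connected) (heven : Even (Fintype.card V)) :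
    ∃ c : Sym2 V → Fin 3 → ℕ, IsOddMultiColoring m c :=
  multigraph_connected_even_oddChromaticIndex_le_three_general m hloopless hconn heven
end

section
/- Every finite connected simple graph G with an even number of vertices contains a spanning subgraph H (on the same vertex set, with edge set a subset of the edges of G) in which every vertex has odd degree. -/
/-!
Fix a root `r` and, for every vertex `u`, a walk from `r` to `u`. A walk from `x` to `y` meets
every vertex other than `x` and `y` in an even number of edges (counted with multiplicity), and
each of `x` and `y` in an odd number unless `x = y`. Let `H` consist of the edges used an odd
number of times by all these walks together. The degree of `v` in `H` is then congruent mod 2 to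
`∑ u, ([v = r] + [v = u]) = |V| [v = r] + 1 ≡ 1`, since `|V|` is even.
-/

open Finset

theorem Finset.sum_filter_count_eq_countP_of_subset {α : Type*} [DecidableEq α] {s : Finset α}
    {l : List α} (p : α → Prop) [DecidablePred p] (hl : l.toFinset ⊆ s) :
    ∑ a ∈ s.filter p, l.count a = l.countP (fun a => p a) := by
  rw [← sum_filter_count_eq_countP]
  refine (sum_subset (filter_subset_filter p hl) fun a has ha => ?_).symm
  exact List.count_eq_zero.mpr fun h =>
    ha (mem_filter.mpr ⟨List.mem_toFinset.mpr h, (mem_filter.mp has).2⟩)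

theorem Finset.natCast_card_filter_odd {α : Type*} (s : Finset α) (c : α → ℕ) :
    (#(s.filter fun a => Odd (c a)) : ZMod 2) = ∑ a ∈ s, (c a : ZMod 2) := by
  rw [natCast_card_filter]
  refine sum_congr rfl fun a _ => ?_
  split_ifs with h
  · exact (ZMod.natCast_eq_one_iff_odd.mpr h).symm
  · exact (ZMod.natCast_eq_zero_iff_even.mpr (Nat.not_odd_iff_even.mp h)).symm

namespace SimpleGraph.Walk

variable {V : Type*} [DecidableEq V] {G : SimpleGraph V}

theorem natCast_countP_mem_edges {x y : V} (w : G.Walk x y) (v : V) :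
    (w.edges.countP (fun e => v ∈ e) : ZMod 2) =
      (if v = x then 1 else 0) + (if v = y then 1 else 0) := by
  induction w with
  | nil => rw [edges_nil, List.countP_nil, Nat.cast_zero, CharTwo.add_self_eq_zero]
  | @cons a b y hab w ih =>
    simp only [edges_cons, List.countP_cons, Nat.cast_add, ih, Sym2.mem_iff]
    by_cases hva : v = a <;> by_cases hvb : v = b
    · exact absurd (hva ▸ hvb) hab.ne
    · subst hva
      simp [hab.ne, add_comm]
    · subst hvb
      simp only [↓reduceIte, hab.ne.symm, or_true, decide_true, Nat.cast_one, zero_add]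
      rw [add_right_comm, CharTwo.add_self_eq_zero, zero_add]
    · simp [hva, hvb]

end SimpleGraph.Walk

/-- Every finite connected simple graph with an even number of vertices contains a
spanning subgraph (given by a subset `E` of its edges) in which every vertex has
odd degree. -/
theorem connected_even_order_exists_odd_spanning_subgraph
    {V : Type*} [Fintype V] [DecidableEq V]
    (G : SimpleGraph V) [DecidableRel G.Adj]
    (hconn : G.Connected) (heven : Even (Fintype.card V)) :
    ∃ E ⊆ G.edgeFinset, ∀ v : V, Odd ((E.filter (fun e => v ∈ e)).card) := by
  obtain ⟨r⟩ := hconn.nonempty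
  let w (u : V) : G.Walk r u := (hconn.preconnected r u).some
  let c (e : Sym2 V) : ℕ := ∑ u, (w u).edges.count e
  refine ⟨G.edgeFinset.filter (fun e => Odd (c e)), filter_subset _ _, fun v => ?_⟩
  rw [← ZMod.natCast_eq_one_iff_odd, filter_comm, natCast_card_filter_odd]
  calc ∑ e ∈ G.edgeFinset.filter (v ∈ ·), (c e : ZMod 2)
      = ∑ u, ((w u).edges.countP (fun e => v ∈ e) : ZMod 2) := by
        simp only [c, Nat.cast_sum]
        rw [sum_comm]
        refine sum_congr rfl fun u _ => ?_
        rw [← Nat.cast_sum, sum_filter_count_eq_countP_of_subset]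
        exact fun e he =>
          G.mem_edgeFinset.mpr ((w u).edges_subset_edgeSet (List.mem_toFinset.mp he))
    _ = ∑ u : V, ((if v = r then 1 else 0) + (if v = u then 1 else 0)) := by
        simp only [SimpleGraph.Walk.natCast_countP_mem_edges]
    _ = 1 := by
        rw [sum_add_distrib, sum_const, sum_ite_eq, if_pos (mem_univ v), card_univ,
          nsmul_eq_mul, ZMod.natCast_eq_zero_iff_even.mpr heven, zero_mul, zero_add]
end
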